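/- arXiv:2107.02432 — 10 statements merged into one kernel-verified Lean document; each statement's English description precedes it below -/
import Mathlib

section
/- Let A be a real d×n matrix, b ∈ ℝ^d, P a real m×n matrix, f : ℝ → ℝ convex and three times differentiable, and let ε > 0, R > 0 and weights w ∈ ℝ^m be given, with resistances r_i = R^{−2}(f''(w_i) + ε·Φ(w)/m). If there exists x* ∈ ℝ^n with A x* = b and ‖P x*‖_∞ ≤ R, then Ψ(r) = inf{ ∑_{i=1}^m r_i (PΔ)_i² : AΔ = b } ≤ (1+ε)·Φ(w). -/
/-!
Convexity makes every `f''(wᵢ)`, hence every `rᵢ`, nonnegative, so `‖P x*‖_∞ ≤ R` bounds the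
energy of the feasible point `Δ = x*` by `R² ∑ rᵢ = Φ + m · εΦ/m = (1 + ε) Φ`.
-/

open Finset

theorem ConvexOn.deriv_deriv_nonneg {f : ℝ → ℝ} (hconv : ConvexOn ℝ Set.univ f)
    (hf : Differentiable ℝ f) (x : ℝ) : 0 ≤ deriv (deriv f) x :=
  (monotoneOn_univ.mp (hconv.monotoneOn_deriv fun y _ => hf y)).deriv_nonneg

section Energy

variable {ι κ ρ : Type*} [Fintype ι] [Fintype κ]

theorem sInf_energy_le_of_mulVec_eq {A : Matrix ρ κ ℝ} {b : ρ → ℝ} {P : Matrix ι κ ℝ}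
    {r : ι → ℝ} (hr : ∀ i, 0 ≤ r i) {x : κ → ℝ} (hx : A.mulVec x = b) :
    sInf {v : ℝ | ∃ Δ : κ → ℝ, A.mulVec Δ = b ∧ v = ∑ i, r i * (P.mulVec Δ) i ^ 2} ≤
      ∑ i, r i * (P.mulVec x) i ^ 2 := by
  refine csInf_le ⟨0, ?_⟩ ⟨x, hx, rfl⟩
  rintro v ⟨Δ, -, rfl⟩
  exact sum_nonneg fun i _ => mul_nonneg (hr i) (sq_nonneg _)

theorem sum_mul_sq_le_sq_mul_sum {r y : ι → ℝ} (hr : ∀ i, 0 ≤ r i) {R : ℝ} (hy : ‖y‖ ≤ R) :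
    ∑ i, r i * y i ^ 2 ≤ R ^ 2 * ∑ i, r i := by
  rw [mul_sum]
  refine sum_le_sum fun i _ => ?_
  have hyi : |y i| ≤ R := (norm_le_pi_norm y i).trans hy
  rw [mul_comm (R ^ 2)]
  exact mul_le_mul_of_nonneg_left (sq_le_sq' (abs_le.mp hyi).1 (abs_le.mp hyi).2) (hr i)

end Energy

-- For `ι` empty both sides vanish, which absorbs the division by `card ι = 0`.
theorem sum_add_mul_sum_div_card {ι : Type*} [Fintype ι] (φ : ι → ℝ) (ε : ℝ) :
    ∑ i, (φ i + ε * (∑ j, φ j) / Fintype.card ι) = (1 + ε) * ∑ i, φ i := by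
  rcases isEmpty_or_nonempty ι with hι | hι
  · simp
  · rw [sum_add_distrib, sum_const, card_univ, nsmul_eq_mul,
      mul_div_cancel₀ _ (Nat.cast_ne_zero.mpr Fintype.card_ne_zero)]
    ring

theorem psi_le_one_add_eps_mul_phi_general
    (d n m : ℕ) (A : Matrix (Fin d) (Fin n) ℝ) (b : Fin d → ℝ)
    (P : Matrix (Fin m) (Fin n) ℝ) (f : ℝ → ℝ)
    (hconv : ConvexOn ℝ Set.univ f)
    (hf1 : Differentiable ℝ f)
    (ε R : ℝ) (hε : 0 < ε) (hR : 0 < R)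
    (w r : Fin m → ℝ)
    (hr : ∀ i, r i = 1 / R ^ 2 *
      (deriv (deriv f) (w i) + ε * (∑ j, deriv (deriv f) (w j)) / m))
    (xstar : Fin n → ℝ) (hxA : A.mulVec xstar = b)
    (hxR : ‖P.mulVec xstar‖ ≤ R) :
    sInf {v : ℝ | ∃ Δ : Fin n → ℝ, A.mulVec Δ = b ∧
        v = ∑ i, r i * (P.mulVec Δ) i ^ 2} ≤
      (1 + ε) * ∑ i, deriv (deriv f) (w i) := by
  have hf'' := hconv.deriv_deriv_nonneg hf1
  have hr_nonneg : ∀ i, 0 ≤ r i := fun i => by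
    rw [hr i]
    have := sum_nonneg fun j (_ : j ∈ univ) => hf'' (w j)
    have := hf'' (w i)
    positivity
  calc _ ≤ ∑ i, r i * (P.mulVec xstar) i ^ 2 := sInf_energy_le_of_mulVec_eq hr_nonneg hxA
    _ ≤ R ^ 2 * ∑ i, r i := sum_mul_sq_le_sq_mul_sum hr_nonneg hxR
    _ = (1 + ε) * ∑ i, deriv (deriv f) (w i) := by
      simp_rw [hr, ← mul_sum, ← mul_assoc, mul_one_div_cancel (pow_ne_zero 2 hR.ne'), one_mul]
      simpa using sum_add_mul_sum_div_card (fun i => deriv (deriv f) (w i)) ε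

/-- Lemma 2.4 (first inequality): Ψ(r) ≤ (1+ε)·Φ(w). -/
theorem psi_le_one_add_eps_mul_phi
    (d n m : ℕ) (A : Matrix (Fin d) (Fin n) ℝ) (b : Fin d → ℝ)
    (P : Matrix (Fin m) (Fin n) ℝ) (f : ℝ → ℝ)
    (hconv : ConvexOn ℝ Set.univ f)
    (hf1 : Differentiable ℝ f) (hf2 : Differentiable ℝ (deriv f))
    (hf3 : Differentiable ℝ (deriv (deriv f)))
    (ε R : ℝ) (hε : 0 < ε) (hR : 0 < R)
    (w r : Fin m → ℝ)
    (hr : ∀ i, r i = 1 / R ^ 2 *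
      (deriv (deriv f) (w i) + ε * (∑ j, deriv (deriv f) (w j)) / m))
    (xstar : Fin n → ℝ) (hxA : A.mulVec xstar = b)
    (hxR : ‖P.mulVec xstar‖ ≤ R) :
    sInf {v : ℝ | ∃ Δ : Fin n → ℝ, A.mulVec Δ = b ∧
        v = ∑ i, r i * (P.mulVec Δ) i ^ 2} ≤
      (1 + ε) * ∑ i, deriv (deriv f) (w i) :=
  psi_le_one_add_eps_mul_phi_general d n m A b P f hconv hf1 ε R hε hR w r hr xstar hxA hxR
end

section
/- Let A be a real d×n matrix, b ∈ ℝ^d, P a real m×n matrix, f : ℝ → ℝ convex and three times differentiable, ε > 0, R > 0, τ > 0, and w ∈ ℝ^m with Φ(w) > 0. Let r_i = R^{−2}(f''(w_i) + ε·Φ(w)/m), suppose there exists x* with A x* = b and ‖P x*‖_∞ ≤ R, and let Δ̃ attain the minimum of ∑_i r_i (PΔ)_i² over {Δ : AΔ = b}. Let I be a nonempty subset of { i : |(PΔ̃)_i| ≥ R·τ }, and define r' by r'_i = (1+ε)·r_i for i ∈ I and r'_i = r_i otherwise. Then Ψ(r') ≥ Ψ(r)·(1 + ε²τ²/((1+ε)²·m)),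 where Ψ(s) = inf{ ∑_i s_i (PΔ)_i² : AΔ = b }. -/
/-!
Let `E = Ψ(r)` be the energy of the `r`-optimal `Δ̃`. Since `Δ̃` minimises a quadratic over an
affine space, every feasible `Δ` has `r`-energy `E + ∑ r_i (P(Δ - Δ̃))_i²`. Raising the
resistances on `I` adds `ε ∑_{i ∈ I} r_i (PΔ)_i²`, and for one `i ∈ I` the two extra terms
together are at least `ε/(1+ε) · r_i (PΔ̃)_i²`, since `(1+ε)((u-v)² + εu²) - εv² = ((1+ε)u - v)²`.
Comparing with `x*` gives `E ≤ (1+ε)Φ`, while `r_i ≥ εΦ/(mR²)` and `|(PΔ̃)_i| ≥ Rτ` give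
`r_i (PΔ̃)_i² ≥ ετ²Φ/m ≥ ετ²E/((1+ε)m)`.
-/

open Finset Matrix

noncomputable def weightedEnergy {ι : Type*} [Fintype ι] (r x : ι → ℝ) : ℝ :=
  ∑ i, r i * x i ^ 2

section WeightedEnergy

variable {ι : Type*} [Fintype ι] {r x y : ι → ℝ}

lemma weightedEnergy_add_smul (r x y : ι → ℝ) (t : ℝ) :
    weightedEnergy r (x + t • y) =
      weightedEnergy r x + 2 * t * ∑ i, r i * x i * y i + t ^ 2 * weightedEnergy r y := by
  simp only [weightedEnergy, mul_sum, ← sum_add_distrib]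
  exact sum_congr rfl fun i _ => by simp only [Pi.add_apply, Pi.smul_apply, smul_eq_mul]; ring

lemma weightedEnergy_add_of_forall_le
    (h : ∀ t : ℝ, weightedEnergy r x ≤ weightedEnergy r (x + t • y)) :
    weightedEnergy r (x + y) = weightedEnergy r x + weightedEnergy r y := by
  have hcross : ∑ i, r i * x i * y i = 0 := by
    have := discrim_le_zero (a := weightedEnergy r y) (b := 2 * ∑ i, r i * x i * y i) (c := 0)
      fun t => by linarith [h t, weightedEnergy_add_smul r x y t]
    rw [discrim] at this
    nlinarith [sq_nonneg (∑ i, r i * x i * y i)]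
  simpa [hcross] using weightedEnergy_add_smul r x y 1

lemma weightedEnergy_le_of_norm_le (hr : 0 ≤ r) {R : ℝ} (hx : ‖x‖ ≤ R) :
    weightedEnergy r x ≤ (∑ i, r i) * R ^ 2 := by
  rw [sum_mul]
  refine sum_le_sum fun i _ => mul_le_mul_of_nonneg_left ?_ (hr i)
  rw [← sq_abs]
  exact pow_le_pow_left₀ (abs_nonneg _) ((norm_le_pi_norm x i).trans hx) 2

lemma weightedEnergy_of_update {r' : ι → ℝ} {ε : ℝ} {I : Finset ι}
    (hr'I : ∀ i ∈ I, r' i = (1 + ε) * r i) (hr'nI : ∀ i ∉ I, r' i = r i) (x : ι → ℝ) :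
    weightedEnergy r' x = weightedEnergy r x + ε * ∑ i ∈ I, r i * x i ^ 2 := by
  classical
  have hterm : ∀ i, r' i * x i ^ 2 = r i * x i ^ 2 + if i ∈ I then ε * (r i * x i ^ 2) else 0 := by
    intro i
    by_cases hi : i ∈ I
    · rw [hr'I i hi, if_pos hi]; ring
    · rw [hr'nI i hi, if_neg hi, add_zero]
  simp only [weightedEnergy, hterm, sum_add_distrib, sum_ite_mem, univ_inter, mul_sum]

end WeightedEnergy

lemma mul_sq_le_one_add_mul_sq_sub_add_mul_sq (ε u v : ℝ) :
    ε * v ^ 2 ≤ (1 + ε) * ((u - v) ^ 2 + ε * u ^ 2) := by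
  nlinarith [sq_nonneg ((1 + ε) * u - v)]

section Minimiser

variable {ι κ ν : Type*} [Fintype ι] [Fintype ν]
  {A : Matrix κ ν ℝ} {b : κ → ℝ} {P : Matrix ι ν ℝ} {r : ι → ℝ} {Δt : ν → ℝ}

lemma weightedEnergy_mulVec_eq_add_of_isMin (hΔt : A *ᵥ Δt = b)
    (hmin : ∀ Δ, A *ᵥ Δ = b → weightedEnergy r (P *ᵥ Δt) ≤ weightedEnergy r (P *ᵥ Δ))
    {Δ : ν → ℝ} (hΔ : A *ᵥ Δ = b) :
    weightedEnergy r (P *ᵥ Δ) = weightedEnergy r (P *ᵥ Δt) + weightedEnergy r (P *ᵥ (Δ - Δt)) := by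
  have h := weightedEnergy_add_of_forall_le (r := r) (x := P *ᵥ Δt) (y := P *ᵥ (Δ - Δt))
    fun t => by
      simpa only [mulVec_add, mulVec_smul] using
        hmin (Δt + t • (Δ - Δt)) (by simp [mulVec_add, mulVec_smul, mulVec_sub, hΔt, hΔ])
  rwa [← mulVec_add, add_sub_cancel] at h

lemma weightedEnergy_add_le_of_isMin {r' : ι → ℝ} {ε : ℝ} {I : Finset ι} {i₀ : ι}
    (hr : 0 ≤ r) (hε : 0 ≤ ε) (hi₀ : i₀ ∈ I)
    (hr'I : ∀ i ∈ I, r' i = (1 + ε) * r i) (hr'nI : ∀ i ∉ I, r' i = r i)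
    (hΔt : A *ᵥ Δt = b)
    (hmin : ∀ Δ, A *ᵥ Δ = b → weightedEnergy r (P *ᵥ Δt) ≤ weightedEnergy r (P *ᵥ Δ))
    {Δ : ν → ℝ} (hΔ : A *ᵥ Δ = b) :
    weightedEnergy r (P *ᵥ Δt) + ε / (1 + ε) * (r i₀ * (P *ᵥ Δt) i₀ ^ 2) ≤
      weightedEnergy r' (P *ᵥ Δ) := by
  set u := P *ᵥ Δ
  set v := P *ᵥ Δt
  have hdiff : r i₀ * (u i₀ - v i₀) ^ 2 ≤ weightedEnergy r (P *ᵥ (Δ - Δt)) := by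
    rw [mulVec_sub]
    exact single_le_sum (f := fun i => r i * (u - v) i ^ 2)
      (fun i _ => mul_nonneg (hr i) (sq_nonneg _)) (mem_univ i₀)
  have hI : r i₀ * u i₀ ^ 2 ≤ ∑ i ∈ I, r i * u i ^ 2 :=
    single_le_sum (fun i _ => mul_nonneg (hr i) (sq_nonneg _)) hi₀
  have hlocal : ε / (1 + ε) * (r i₀ * v i₀ ^ 2) ≤
      r i₀ * (u i₀ - v i₀) ^ 2 + ε * (r i₀ * u i₀ ^ 2) := by
    rw [div_mul_eq_mul_div, div_le_iff₀ (by linarith)]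
    nlinarith [mul_le_mul_of_nonneg_left
      (mul_sq_le_one_add_mul_sq_sub_add_mul_sq ε (u i₀) (v i₀)) (hr i₀)]
  rw [weightedEnergy_of_update hr'I hr'nI, weightedEnergy_mulVec_eq_add_of_isMin hΔt hmin hΔ]
  linarith [mul_le_mul_of_nonneg_left hI hε]

lemma csInf_weightedEnergy_mul_le {r' : ι → ℝ} {c : ℝ} (hΔt : A *ᵥ Δt = b)
    (hmin : ∀ Δ, A *ᵥ Δ = b → weightedEnergy r (P *ᵥ Δt) ≤ weightedEnergy r (P *ᵥ Δ))
    (h : ∀ Δ, A *ᵥ Δ = b → weightedEnergy r (P *ᵥ Δt) * c ≤ weightedEnergy r' (P *ᵥ Δ)) :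
    sInf {v | ∃ Δ, A *ᵥ Δ = b ∧ v = weightedEnergy r (P *ᵥ Δ)} * c ≤
      sInf {v | ∃ Δ, A *ᵥ Δ = b ∧ v = weightedEnergy r' (P *ᵥ Δ)} := by
  have hleast : IsLeast {v | ∃ Δ, A *ᵥ Δ = b ∧ v = weightedEnergy r (P *ᵥ Δ)}
      (weightedEnergy r (P *ᵥ Δt)) :=
    ⟨⟨Δt, hΔt, rfl⟩, by rintro _ ⟨Δ, hΔ, rfl⟩; exact hmin Δ hΔ⟩
  rw [hleast.csInf_eq]
  exact le_csInf ⟨_, Δt, hΔt, rfl⟩ (by rintro _ ⟨Δ, hΔ, rfl⟩; exact h Δ hΔ)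

end Minimiser

/-- With `φ i = f''(w i)` these are the resistances `r_i = R⁻²(f''(w_i) + ε Φ(w)/m)`. -/
noncomputable def resistances {m : ℕ} (R ε : ℝ) (φ : Fin m → ℝ) (i : Fin m) : ℝ :=
  1 / R ^ 2 * (φ i + ε * (∑ j, φ j) / m)

section Resistances

variable {m : ℕ} {R ε : ℝ} {φ : Fin m → ℝ}

lemma le_resistances (hφ : 0 ≤ φ) (i : Fin m) :
    ε * (∑ j, φ j) / m / R ^ 2 ≤ resistances R ε φ i := by
  rw [resistances, div_eq_mul_one_div _ (R ^ 2), mul_comm]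
  exact mul_le_mul_of_nonneg_left (le_add_of_nonneg_left (hφ i)) (by positivity)

lemma resistances_nonneg (hφ : 0 ≤ φ) (hε : 0 ≤ ε) : 0 ≤ resistances R ε φ := fun i =>
  le_trans (by have := sum_nonneg fun j (_ : j ∈ univ) => hφ j; positivity) (le_resistances hφ i)

lemma sum_resistances_mul_sq (hR : R ≠ 0) :
    (∑ i, resistances R ε φ i) * R ^ 2 = (1 + ε) * ∑ j, φ j := by
  rcases Nat.eq_zero_or_pos m with rfl | hm
  · simp
  simp only [resistances, ← mul_sum, sum_add_distrib, sum_const, card_univ, Fintype.card_fin,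
    nsmul_eq_mul]
  field_simp

lemma mul_weightedEnergy_le_resistances_mul_sq (hφ : 0 ≤ φ) (hε : 0 ≤ ε) (hR : 0 < R)
    {τ : ℝ} (hτ : 0 ≤ τ) {x y : Fin m → ℝ}
    (hx : weightedEnergy (resistances R ε φ) x ≤ (1 + ε) * ∑ j, φ j)
    {i : Fin m} (hy : R * τ ≤ |y i|) :
    ε * τ ^ 2 / ((1 + ε) * m) * weightedEnergy (resistances R ε φ) x ≤
      resistances R ε φ i * y i ^ 2 := by
  have hy2 : R ^ 2 * τ ^ 2 ≤ y i ^ 2 := by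
    rw [← mul_pow, ← sq_abs (y i)]
    exact pow_le_pow_left₀ (by positivity) hy 2
  calc ε * τ ^ 2 / ((1 + ε) * m) * weightedEnergy (resistances R ε φ) x
      ≤ ε * τ ^ 2 / ((1 + ε) * m) * ((1 + ε) * ∑ j, φ j) :=
        mul_le_mul_of_nonneg_left hx (by positivity)
    _ = ε * (∑ j, φ j) / m / R ^ 2 * (R ^ 2 * τ ^ 2) := by field_simp
    _ ≤ resistances R ε φ i * y i ^ 2 :=
        mul_le_mul (le_resistances hφ i) hy2 (by positivity) (resistances_nonneg hφ hε i)

end Resistances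

theorem psi_increase_width_step_general
    (d n m : ℕ) (A : Matrix (Fin d) (Fin n) ℝ) (b : Fin d → ℝ)
    (P : Matrix (Fin m) (Fin n) ℝ) (f : ℝ → ℝ)
    (hconv : ConvexOn ℝ Set.univ f)
    (hf1 : Differentiable ℝ f)
    (ε R τ : ℝ) (hε : 0 < ε) (hR : 0 < R) (hτ : 0 < τ)
    (w : Fin m → ℝ)
    (r : Fin m → ℝ)
    (hr : ∀ i, r i = 1 / R ^ 2 *
      (deriv (deriv f) (w i) + ε * (∑ j, deriv (deriv f) (w j)) / m))
    (xstar : Fin n → ℝ) (hxA : A.mulVec xstar = b)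
    (hxR : ‖P.mulVec xstar‖ ≤ R)
    (Δt : Fin n → ℝ) (hΔA : A.mulVec Δt = b)
    (hΔmin : ∀ Δ : Fin n → ℝ, A.mulVec Δ = b →
      (∑ i, r i * (P.mulVec Δt) i ^ 2) ≤ ∑ i, r i * (P.mulVec Δ) i ^ 2)
    (I : Finset (Fin m)) (hIne : I.Nonempty)
    (hIwidth : ∀ i ∈ I, R * τ ≤ |(P.mulVec Δt) i|)
    (r' : Fin m → ℝ)
    (hr'I : ∀ i ∈ I, r' i = (1 + ε) * r i)
    (hr'nI : ∀ i ∉ I, r' i = r i) :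
    sInf {v : ℝ | ∃ Δ : Fin n → ℝ, A.mulVec Δ = b ∧
        v = ∑ i, r' i * (P.mulVec Δ) i ^ 2} ≥
      sInf {v : ℝ | ∃ Δ : Fin n → ℝ, A.mulVec Δ = b ∧
        v = ∑ i, r i * (P.mulVec Δ) i ^ 2} *
      (1 + ε ^ 2 * τ ^ 2 / ((1 + ε) ^ 2 * m)) := by
  obtain ⟨i₀, hi₀⟩ := hIne
  set φ : Fin m → ℝ := fun j => deriv (deriv f) (w j)
  have hφ : 0 ≤ φ := fun j =>
    (monotoneOn_univ.1 (hconv.monotoneOn_deriv fun x _ => hf1 x)).deriv_nonneg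
  obtain rfl : r = resistances R ε φ := funext hr
  set E := weightedEnergy (resistances R ε φ) (P *ᵥ Δt)
  have hE : E ≤ (1 + ε) * ∑ j, φ j :=
    calc E ≤ weightedEnergy (resistances R ε φ) (P *ᵥ xstar) := hΔmin xstar hxA
      _ ≤ (∑ i, resistances R ε φ i) * R ^ 2 :=
        weightedEnergy_le_of_norm_le (resistances_nonneg hφ hε.le) hxR
      _ = (1 + ε) * ∑ j, φ j := sum_resistances_mul_sq hR.ne'
  refine csInf_weightedEnergy_mul_le hΔA hΔmin fun Δ hΔ => ?_
  calc E * (1 + ε ^ 2 * τ ^ 2 / ((1 + ε) ^ 2 * m))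
      = E + ε / (1 + ε) * (ε * τ ^ 2 / ((1 + ε) * m) * E) := by field_simp
    _ ≤ E + ε / (1 + ε) * (resistances R ε φ i₀ * (P *ᵥ Δt) i₀ ^ 2) := by
        have := mul_weightedEnergy_le_resistances_mul_sq hφ hε.le hR hτ.le hE (hIwidth i₀ hi₀)
        gcongr
    _ ≤ weightedEnergy r' (P *ᵥ Δ) :=
        weightedEnergy_add_le_of_isMin (resistances_nonneg hφ hε.le) hε.le hi₀ hr'I hr'nI
          hΔA hΔmin hΔ

/-- Lemma 3.1, single width-reduction step, resistances increased by (1+ε):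
Ψ(r') ≥ Ψ(r)·(1 + ε²τ²/((1+ε)²·m)). -/
theorem psi_increase_width_step
    (d n m : ℕ) (A : Matrix (Fin d) (Fin n) ℝ) (b : Fin d → ℝ)
    (P : Matrix (Fin m) (Fin n) ℝ) (f : ℝ → ℝ)
    (hconv : ConvexOn ℝ Set.univ f)
    (hf1 : Differentiable ℝ f) (hf2 : Differentiable ℝ (deriv f))
    (hf3 : Differentiable ℝ (deriv (deriv f)))
    (ε R τ : ℝ) (hε : 0 < ε) (hR : 0 < R) (hτ : 0 < τ)
    (w : Fin m → ℝ) (hΦ : 0 < ∑ j, deriv (deriv f) (w j))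
    (r : Fin m → ℝ)
    (hr : ∀ i, r i = 1 / R ^ 2 *
      (deriv (deriv f) (w i) + ε * (∑ j, deriv (deriv f) (w j)) / m))
    (xstar : Fin n → ℝ) (hxA : A.mulVec xstar = b)
    (hxR : ‖P.mulVec xstar‖ ≤ R)
    (Δt : Fin n → ℝ) (hΔA : A.mulVec Δt = b)
    (hΔmin : ∀ Δ : Fin n → ℝ, A.mulVec Δ = b →
      (∑ i, r i * (P.mulVec Δt) i ^ 2) ≤ ∑ i, r i * (P.mulVec Δ) i ^ 2)
    (I : Finset (Fin m)) (hIne : I.Nonempty)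
    (hIwidth : ∀ i ∈ I, R * τ ≤ |(P.mulVec Δt) i|)
    (r' : Fin m → ℝ)
    (hr'I : ∀ i ∈ I, r' i = (1 + ε) * r i)
    (hr'nI : ∀ i ∉ I, r' i = r i) :
    sInf {v : ℝ | ∃ Δ : Fin n → ℝ, A.mulVec Δ = b ∧
        v = ∑ i, r' i * (P.mulVec Δ) i ^ 2} ≥
      sInf {v : ℝ | ∃ Δ : Fin n → ℝ, A.mulVec Δ = b ∧
        v = ∑ i, r i * (P.mulVec Δ) i ^ 2} *
      (1 + ε ^ 2 * τ ^ 2 / ((1 + ε) ^ 2 * m)) :=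
  psi_increase_width_step_general d n m A b P f hconv hf1 ε R τ hε hR hτ w r hr xstar hxA hxR Δt hΔA
    hΔmin I hIne hIwidth r' hr'I hr'nI
end

section
/- Let A be a real d×n matrix, b ∈ ℝ^d, P a real m×n matrix, and let f : ℝ → ℝ be convex, three times differentiable with continuous third derivative, and M-quasi-self-concordant (|f'''(s)| ≤ M·f''(s) for all s) for some M > 0. Let ε > 0, R > 0, and α, τ > 0 with α·τ ≤ 1/M, let w ∈ ℝ^m, let r_i = R^{−2}(f''(w_i) + ε·Φ(w)/m), suppose there exists x* with A x* = b and ‖P x*‖_∞ ≤ R, and let Δ̃ attain the minimum of ∑_i r_i (PΔ)_i² over {Δ : AΔ = b}, with ‖PΔ̃‖_∞ ≤ R·τ. Then Φ(w + (ε·α/R)·|PΔ̃|) ≤ (1 + e^ε·(1+ε)·ε·α·M)·Φ(w), where |PΔ̃| denotes the coordinatewise absolute value. -/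
/-!
Quasi-self-concordance `|g'| ≤ M g` for `g = f''` gives, by Grönwall, `g (x + δ) ≤ exp (M δ) g x`;
the width bound makes every step satisfy `M δᵢ ≤ ε`, so `exp (M δᵢ) ≤ 1 + exp ε · M δᵢ` and the
increase of `Φ` is at most `exp ε · M · ∑ δᵢ g (wᵢ)`. By Cauchy–Schwarz this first-order term is
controlled by the energy `∑ rᵢ (PΔ̃)ᵢ²`, which by optimality of `Δ̃` is at most the energy of the
feasible `x*`, hence at most `R² ∑ rᵢ = (1 + ε) Φ`.
-/

open Finset Real

theorem le_exp_mul_of_abs_deriv_le {g : ℝ → ℝ} {M : ℝ} (hg : Differentiable ℝ g)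
    (hg0 : ∀ s, 0 ≤ g s) (hqsc : ∀ s, |deriv g s| ≤ M * g s) (x : ℝ) {δ : ℝ} (hδ : 0 ≤ δ) :
    g (x + δ) ≤ exp (M * δ) * g x := by
  have h := norm_le_gronwallBound_of_norm_deriv_right_le (f := g) (ε := 0) (a := x) (b := x + δ)
    hg.continuous.continuousOn (fun t _ => (hg t).hasDerivAt.hasDerivWithinAt) le_rfl
    (fun t _ => by simpa [Real.norm_eq_abs, abs_of_nonneg (hg0 t)] using hqsc t)
    (x + δ) ⟨by linarith, le_rfl⟩
  simpa [gronwallBound_ε0, Real.norm_eq_abs, abs_of_nonneg (hg0 _), mul_comm] using h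

theorem exp_le_one_add_exp_mul {x ε : ℝ} (hx : 0 ≤ x) (hxε : x ≤ ε) :
    exp x ≤ 1 + exp ε * x := by
  have h₁ : exp x * (-x + 1) ≤ 1 := by
    simpa [← exp_add] using mul_le_mul_of_nonneg_left (add_one_le_exp (-x)) (exp_pos x).le
  nlinarith [exp_le_exp.mpr hxε]

theorem sq_sum_mul_le_of_le {ι : Type*} (s : Finset ι) (u : ι → ℝ) {a ρ : ι → ℝ}
    (ha : ∀ i ∈ s, 0 ≤ a i) (haρ : ∀ i ∈ s, a i ≤ ρ i) :
    (∑ i ∈ s, u i * a i) ^ 2 ≤ (∑ i ∈ s, ρ i * u i ^ 2) * ∑ i ∈ s, a i := by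
  refine sum_sq_le_sum_mul_sum_of_sq_le_mul s (fun i hi => ?_) ha (fun i hi => ?_)
  · exact mul_nonneg ((ha i hi).trans (haρ i hi)) (sq_nonneg _)
  · have := mul_le_mul_of_nonneg_right (haρ i hi) (mul_nonneg (ha i hi) (sq_nonneg (u i)))
    nlinarith

theorem sum_abs_mul_le_of_sum_mul_sq_le {ι : Type*} (s : Finset ι) {v a r : ι → ℝ} {R c : ℝ}
    (hR : 0 ≤ R) (hc : 0 ≤ c) (ha : ∀ i ∈ s, 0 ≤ a i) (har : ∀ i ∈ s, a i ≤ R ^ 2 * r i)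
    (henergy : ∑ i ∈ s, r i * v i ^ 2 ≤ (1 + c) * ∑ i ∈ s, a i) :
    ∑ i ∈ s, |v i| * a i ≤ R * (1 + c) * ∑ i ∈ s, a i := by
  have hCS := sq_sum_mul_le_of_le s (fun i => |v i|) ha har
  simp only [sq_abs, mul_assoc, ← mul_sum] at hCS
  have hA : 0 ≤ ∑ i ∈ s, a i := sum_nonneg ha
  refine abs_le_of_sq_le_sq' ?_ (by positivity) |>.2
  calc (∑ i ∈ s, |v i| * a i) ^ 2 ≤ R ^ 2 * ((1 + c) * (∑ i ∈ s, a i) * ∑ i ∈ s, a i) :=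
        hCS.trans (by gcongr)
    _ ≤ (R * (1 + c) * ∑ i ∈ s, a i) ^ 2 := by
        have : 0 ≤ R ^ 2 * (1 + c) * c * (∑ i ∈ s, a i) ^ 2 := by positivity
        linarith

theorem sum_add_smul_mean_le {ι : Type*} [Fintype ι] (a : ι → ℝ) {c : ℝ} (hc : 0 ≤ c)
    (ha : 0 ≤ ∑ j, a j) :
    ∑ i, (a i + c * (∑ j, a j) / Fintype.card ι) ≤ (1 + c) * ∑ j, a j := by
  rw [sum_add_distrib, sum_const, card_univ, nsmul_eq_mul]
  rcases eq_or_ne (Fintype.card ι : ℝ) 0 with h | h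
  · rw [h]; nlinarith
  · rw [mul_div_cancel₀ _ h]; linarith

theorem sum_mul_sq_le_of_norm_le {ι : Type*} [Fintype ι] {r x : ι → ℝ} {R : ℝ}
    (hr : ∀ i, 0 ≤ r i) (hx : ‖x‖ ≤ R) : ∑ i, r i * x i ^ 2 ≤ R ^ 2 * ∑ i, r i := by
  rw [mul_sum]
  refine sum_le_sum fun i _ => ?_
  have hxi : |x i| ≤ |R| := (norm_le_pi_norm x i).trans (hx.trans (le_abs_self R))
  rw [mul_comm]
  exact mul_le_mul_of_nonneg_right (sq_le_sq.mpr hxi) (hr i)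

theorem sum_mul_sq_le_one_add_mul_sum_of_norm_le {ι : Type*} [Fintype ι] {a r x : ι → ℝ}
    {R c : ℝ} (hR : 0 < R) (hc : 0 ≤ c) (ha : ∀ i, 0 ≤ a i)
    (hr : ∀ i, R ^ 2 * r i = a i + c * (∑ j, a j) / Fintype.card ι) (hx : ‖x‖ ≤ R) :
    ∑ i, r i * x i ^ 2 ≤ (1 + c) * ∑ i, a i := by
  have hA : 0 ≤ ∑ j, a j := sum_nonneg fun j _ => ha j
  have hr0 : ∀ i, 0 ≤ r i := fun i => by
    have hRr : 0 ≤ R ^ 2 * r i := by rw [hr i]; have := ha i; positivity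
    exact nonneg_of_mul_nonneg_right hRr (by positivity)
  calc ∑ i, r i * x i ^ 2 ≤ R ^ 2 * ∑ i, r i := sum_mul_sq_le_of_norm_le hr0 hx
    _ = ∑ i, (a i + c * (∑ j, a j) / Fintype.card ι) := by
        rw [mul_sum]; exact sum_congr rfl fun i _ => hr i
    _ ≤ (1 + c) * ∑ i, a i := sum_add_smul_mean_le a hc hA

theorem le_add_exp_mul_of_abs_deriv_le {g : ℝ → ℝ} {M ε : ℝ} (hM : 0 ≤ M)
    (hg : Differentiable ℝ g) (hg0 : ∀ s, 0 ≤ g s) (hqsc : ∀ s, |deriv g s| ≤ M * g s)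
    (x : ℝ) {δ : ℝ} (hδ : 0 ≤ δ) (hMδ : M * δ ≤ ε) :
    g (x + δ) ≤ g x + exp ε * (M * δ) * g x :=
  calc g (x + δ) ≤ exp (M * δ) * g x := le_exp_mul_of_abs_deriv_le hg hg0 hqsc x hδ
    _ ≤ (1 + exp ε * (M * δ)) * g x :=
        mul_le_mul_of_nonneg_right (exp_le_one_add_exp_mul (mul_nonneg hM hδ) hMδ) (hg0 x)
    _ = g x + exp ε * (M * δ) * g x := by ring

theorem phi_increase_flow_step_general
    (d n m : ℕ) (A : Matrix (Fin d) (Fin n) ℝ) (b : Fin d → ℝ)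
    (P : Matrix (Fin m) (Fin n) ℝ) (f : ℝ → ℝ) (M : ℝ) (hM : 0 < M)
    (hf : ContDiff ℝ 3 f)
    (hqsc : ∀ s : ℝ, |deriv (deriv (deriv f)) s| ≤ M * deriv (deriv f) s)
    (ε R α τ : ℝ) (hε : 0 < ε) (hR : 0 < R) (hα : 0 < α)
    (hατ : α * τ ≤ 1 / M)
    (w : Fin m → ℝ) (r : Fin m → ℝ)
    (hr : ∀ i, r i = 1 / R ^ 2 *
      (deriv (deriv f) (w i) + ε * (∑ j, deriv (deriv f) (w j)) / m))
    (xstar : Fin n → ℝ) (hxA : A.mulVec xstar = b)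
    (hxR : ‖P.mulVec xstar‖ ≤ R)
    (Δt : Fin n → ℝ)
    (hΔmin : ∀ Δ : Fin n → ℝ, A.mulVec Δ = b →
      (∑ i, r i * (P.mulVec Δt) i ^ 2) ≤ ∑ i, r i * (P.mulVec Δ) i ^ 2)
    (hwidth : ‖P.mulVec Δt‖ ≤ R * τ) :
    (∑ i, deriv (deriv f) (w i + ε * α / R * |(P.mulVec Δt) i|)) ≤
      (1 + Real.exp ε * (1 + ε) * ε * α * M) * ∑ i, deriv (deriv f) (w i) := by
  set g := deriv (deriv f)
  set v := P.mulVec Δt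
  set Φ := ∑ j, g (w j)
  have hg0 : ∀ s, 0 ≤ g s := fun s =>
    nonneg_of_mul_nonneg_right ((abs_nonneg _).trans (hqsc s)) hM
  have hΦ0 : 0 ≤ Φ := sum_nonneg fun j _ => hg0 _
  have hρ : ∀ i, R ^ 2 * r i = g (w i) + ε * Φ / Fintype.card (Fin m) := fun i => by
    rw [hr i, Fintype.card_fin]; field_simp
  have henergy : ∑ i, r i * v i ^ 2 ≤ (1 + ε) * Φ := (hΔmin xstar hxA).trans
    (sum_mul_sq_le_one_add_mul_sum_of_norm_le hR hε.le (fun i => hg0 _) hρ hxR)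
  have hS : ∑ i, |v i| * g (w i) ≤ R * (1 + ε) * Φ :=
    sum_abs_mul_le_of_sum_mul_sq_le univ hR.le hε.le (fun i _ => hg0 _)
      (fun i _ => (hρ i).symm ▸ le_add_of_nonneg_right (by positivity)) henergy
  have hMδ : ∀ i, M * (ε * α / R * |v i|) ≤ ε := fun i => by
    have hv : |v i| ≤ R * τ := (norm_le_pi_norm v i).trans hwidth
    have hMατ : M * (α * τ) ≤ 1 := by rwa [le_div_iff₀ hM, mul_comm] at hατ
    calc M * (ε * α / R * |v i|) ≤ M * (ε * α / R * (R * τ)) := by gcongr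
      _ = ε * (M * (α * τ)) := by field_simp
      _ ≤ ε := mul_le_of_le_one_right hε.le hMατ
  have hgdiff : Differentiable ℝ g := (hf.iterate_deriv' 1 2).differentiable one_ne_zero
  calc ∑ i, g (w i + ε * α / R * |v i|)
      ≤ ∑ i, (g (w i) + exp ε * (M * (ε * α / R * |v i|)) * g (w i)) :=
        sum_le_sum fun i _ => le_add_exp_mul_of_abs_deriv_le hM.le hgdiff hg0 hqsc (w i)
          (by positivity) (hMδ i)
    _ = Φ + exp ε * M * (ε * α / R) * ∑ i, |v i| * g (w i) := by
        rw [sum_add_distrib, mul_sum]; congr 1; exact sum_congr rfl fun i _ => by ring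
    _ ≤ Φ + exp ε * M * (ε * α / R) * (R * (1 + ε) * Φ) := by gcongr
    _ = (1 + exp ε * (1 + ε) * ε * α * M) * Φ := by field_simp

/-- Lemma 3.2, single flow step (f'' non-decreasing case):
Φ(w + (εα/R)|PΔ̃|) ≤ (1 + e^ε·(1+ε)·ε·α·M)·Φ(w). -/
theorem phi_increase_flow_step
    (d n m : ℕ) (A : Matrix (Fin d) (Fin n) ℝ) (b : Fin d → ℝ)
    (P : Matrix (Fin m) (Fin n) ℝ) (f : ℝ → ℝ) (M : ℝ) (hM : 0 < M)
    (hconv : ConvexOn ℝ Set.univ f) (hf : ContDiff ℝ 3 f)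
    (hqsc : ∀ s : ℝ, |deriv (deriv (deriv f)) s| ≤ M * deriv (deriv f) s)
    (ε R α τ : ℝ) (hε : 0 < ε) (hR : 0 < R) (hα : 0 < α) (hτ : 0 < τ)
    (hατ : α * τ ≤ 1 / M)
    (w : Fin m → ℝ) (r : Fin m → ℝ)
    (hr : ∀ i, r i = 1 / R ^ 2 *
      (deriv (deriv f) (w i) + ε * (∑ j, deriv (deriv f) (w j)) / m))
    (xstar : Fin n → ℝ) (hxA : A.mulVec xstar = b)
    (hxR : ‖P.mulVec xstar‖ ≤ R)
    (Δt : Fin n → ℝ) (hΔA : A.mulVec Δt = b)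
    (hΔmin : ∀ Δ : Fin n → ℝ, A.mulVec Δ = b →
      (∑ i, r i * (P.mulVec Δt) i ^ 2) ≤ ∑ i, r i * (P.mulVec Δ) i ^ 2)
    (hwidth : ‖P.mulVec Δt‖ ≤ R * τ) :
    (∑ i, deriv (deriv f) (w i + ε * α / R * |(P.mulVec Δt) i|)) ≤
      (1 + Real.exp ε * (1 + ε) * ε * α * M) * ∑ i, deriv (deriv f) (w i) :=
  phi_increase_flow_step_general d n m A b P f M hM hf hqsc ε R α τ hε hR hα hατ w r hr xstar hxA
    hxR Δt hΔmin hwidth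
end

section
/- Let M > 0 and let f : ℝ → ℝ be three times differentiable with continuous third derivative, with f''(s) ≥ 0 and |f'''(s)| ≤ M·f''(s) for all s ∈ ℝ. Then for all x, y ∈ ℝ, e^{−M·|x−y|}·f''(x) ≤ f''(y) ≤ e^{M·|x−y|}·f''(x). -/
/-! With `g = f''`, the bound `g' ≤ M g` makes `t ↦ e^{-Mt} g t` antitone, so
`g y ≤ e^{M(y-x)} g x` for `x ≤ y`; the bound `-M g ≤ g'` gives the same estimate for
`t ↦ g (-t)`, hence `g y ≤ e^{M|x-y|} g x` for all `x, y`. Swapping `x` and `y` gives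
the lower bound. -/

open Real

theorem antitone_exp_neg_mul_mul_of_deriv_le {g : ℝ → ℝ} {M : ℝ} (hg : Differentiable ℝ g)
    (hbound : ∀ t, deriv g t ≤ M * g t) :
    Antitone fun t => exp (-(M * t)) * g t := by
  have hderiv : ∀ t, HasDerivAt (fun t => exp (-(M * t)) * g t)
      (exp (-(M * t)) * (deriv g t - M * g t)) t := fun t => by
    have hexp : HasDerivAt (fun t => exp (-(M * t))) (exp (-(M * t)) * -M) t := by
      simpa using ((hasDerivAt_id t).const_mul M).neg.exp
    exact (hexp.mul (hg t).hasDerivAt).congr_deriv (by ring)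
  refine antitone_of_deriv_nonpos (fun t => (hderiv t).differentiableAt) fun t => ?_
  rw [(hderiv t).deriv]
  exact mul_nonpos_of_nonneg_of_nonpos (exp_pos _).le (sub_nonpos.mpr (hbound t))

theorem le_exp_mul_sub_mul_of_deriv_le {g : ℝ → ℝ} {M x y : ℝ} (hg : Differentiable ℝ g)
    (hbound : ∀ t, deriv g t ≤ M * g t) (hxy : x ≤ y) :
    g y ≤ exp (M * (y - x)) * g x := by
  have hanti := antitone_exp_neg_mul_mul_of_deriv_le hg hbound hxy
  calc g y = exp (M * y) * (exp (-(M * y)) * g y) := by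
        rw [← mul_assoc, ← exp_add, add_neg_cancel, exp_zero, one_mul]
    _ ≤ exp (M * y) * (exp (-(M * x)) * g x) := by gcongr
    _ = exp (M * (y - x)) * g x := by rw [← mul_assoc, ← exp_add]; ring_nf

theorem le_exp_mul_sub_mul_of_neg_mul_le_deriv {g : ℝ → ℝ} {M x y : ℝ}
    (hg : Differentiable ℝ g) (hbound : ∀ t, -(M * g t) ≤ deriv g t) (hyx : y ≤ x) :
    g y ≤ exp (M * (x - y)) * g x := by
  have hreflect := le_exp_mul_sub_mul_of_deriv_le (g := fun t => g (-t)) (M := M)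
    (hg.comp differentiable_neg) (fun t => by rw [deriv_comp_neg]; linarith [hbound (-t)])
    (neg_le_neg hyx)
  simpa [sub_eq_neg_add, add_comm] using hreflect

theorem le_exp_mul_abs_sub_mul_of_abs_deriv_le {g : ℝ → ℝ} {M : ℝ} (hg : Differentiable ℝ g)
    (hbound : ∀ t, |deriv g t| ≤ M * g t) (x y : ℝ) :
    g y ≤ exp (M * |x - y|) * g x := by
  rcases le_total x y with hxy | hyx
  · rw [abs_sub_comm, abs_of_nonneg (sub_nonneg.mpr hxy)]
    exact le_exp_mul_sub_mul_of_deriv_le hg (fun t => (abs_le.mp (hbound t)).2) hxy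
  · rw [abs_of_nonneg (sub_nonneg.mpr hyx)]
    exact le_exp_mul_sub_mul_of_neg_mul_le_deriv hg (fun t => (abs_le.mp (hbound t)).1) hyx

theorem qsc_hessian_stable_general
    (M : ℝ) (f : ℝ → ℝ) (hf : ContDiff ℝ 3 f)
    (hqsc : ∀ s : ℝ, |deriv (deriv (deriv f)) s| ≤ M * deriv (deriv f) s) :
    ∀ x y : ℝ,
      Real.exp (-(M * |x - y|)) * deriv (deriv f) x ≤ deriv (deriv f) y ∧
      deriv (deriv f) y ≤ Real.exp (M * |x - y|) * deriv (deriv f) x := by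
  have hg : Differentiable ℝ (deriv (deriv f)) := by
    have h := hf.differentiable_iteratedDeriv 2 (by norm_num)
    rwa [iteratedDeriv_eq_iterate] at h
  intro x y
  have hlower := le_exp_mul_abs_sub_mul_of_abs_deriv_le hg hqsc y x
  rw [abs_sub_comm] at hlower
  exact ⟨by rwa [exp_neg, inv_mul_le_iff₀ (exp_pos _)],
    le_exp_mul_abs_sub_mul_of_abs_deriv_le hg hqsc x y⟩

/-- Hessian stability for univariate M-q.s.c. functions:
e^{−M|x−y|}·f''(x) ≤ f''(y) ≤ e^{M|x−y|}·f''(x). -/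
theorem qsc_hessian_stable
    (M : ℝ) (hM : 0 < M) (f : ℝ → ℝ) (hf : ContDiff ℝ 3 f)
    (hpos : ∀ s : ℝ, 0 ≤ deriv (deriv f) s)
    (hqsc : ∀ s : ℝ, |deriv (deriv (deriv f)) s| ≤ M * deriv (deriv f) s) :
    ∀ x y : ℝ,
      Real.exp (-(M * |x - y|)) * deriv (deriv f) x ≤ deriv (deriv f) y ∧
      deriv (deriv f) y ≤ Real.exp (M * |x - y|) * deriv (deriv f) x :=
  qsc_hessian_stable_general M f hf hqsc
end

section
/- Let M > 0 and let f : ℝ → ℝ be convex, three times differentiable with continuous third derivative, and M-quasi-self-concordant (|f'''(s)| ≤ M·f''(s) for all s). Let x, δ ∈ ℝ^m with ‖δ‖_∞ ≤ 1/M, and let F(y) = ∑_{i=1}^m f(y_i). Then: (i) F(x) − F(x − δ) ≤ ∑_{i=1}^m f'(x_i)·δ_i − (2e)^{−1}·∑_{i=1}^m f''(x_i)·δ_i²; and (ii) F(x) − F(x − e^{−2}·δ) ≥ e^{−2}·( ∑_{i=1}^m f'(x_i)·δ_i − (2e)^{−1}·∑_{i=1}^m f''(x_i)·δ_i² ). 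-/
/-!
Quasi-self-concordance `|f'''| ≤ M f''` is a Grönwall inequality for `f''`, so `f''` changes by
at most a factor `e` over any interval of length `1 / M`. Along the segment from `xᵢ` to
`xᵢ - δᵢ` (resp. `xᵢ - e⁻² δᵢ`) the curvature is therefore at least `e⁻¹ f''(xᵢ)` (resp. at most
`e f''(xᵢ)`), and second-order Taylor expansion with these curvature bounds gives both
inequalities coordinatewise.
-/

open Real Set

theorem norm_le_norm_mul_exp_of_norm_deriv_le_of_le {E : Type*} [NormedAddCommGroup E]
    [NormedSpace ℝ E] {g : ℝ → E} {M a b : ℝ} (hg : Differentiable ℝ g)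
    (hbound : ∀ s, ‖deriv g s‖ ≤ M * ‖g s‖) (hab : a ≤ b) :
    ‖g b‖ ≤ ‖g a‖ * exp (M * (b - a)) := by
  have := norm_le_gronwallBound_of_norm_deriv_right_le hg.continuous.continuousOn
    (fun s _ => (hg s).hasDerivAt.hasDerivWithinAt) le_rfl
    (fun s _ => (hbound s).trans_eq (add_zero _).symm) b ⟨hab, le_rfl⟩
  rwa [gronwallBound_ε0] at this

theorem norm_le_norm_mul_exp_of_norm_deriv_le {E : Type*} [NormedAddCommGroup E]
    [NormedSpace ℝ E] {g : ℝ → E} {M : ℝ} (hg : Differentiable ℝ g)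
    (hbound : ∀ s, ‖deriv g s‖ ≤ M * ‖g s‖) (a b : ℝ) :
    ‖g b‖ ≤ ‖g a‖ * exp (M * |b - a|) := by
  rcases le_total a b with hab | hba
  · rw [abs_of_nonneg (sub_nonneg.2 hab)]
    exact norm_le_norm_mul_exp_of_norm_deriv_le_of_le hg hbound hab
  · have hreflect : ∀ s, ‖deriv (fun u => g (-u)) s‖ ≤ M * ‖g (-s)‖ := fun s => by
      simpa only [deriv_comp_neg, norm_neg] using hbound (-s)
    have := norm_le_norm_mul_exp_of_norm_deriv_le_of_le (hg.comp differentiable_neg) hreflect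
      (neg_le_neg hba)
    simp only [Function.comp_def, neg_neg] at this
    rwa [abs_of_nonpos (sub_nonpos.2 hba), neg_sub, ← neg_sub_neg]

theorem le_exp_one_mul_of_abs_deriv_le {g : ℝ → ℝ} {M a b : ℝ} (hM : 0 < M)
    (hg : Differentiable ℝ g) (hbound : ∀ s, |deriv g s| ≤ M * g s)
    (hab : M * |b - a| ≤ 1) :
    g b ≤ exp 1 * g a := by
  have hg0 : ∀ s, 0 ≤ g s := fun s =>
    (mul_nonneg_iff_of_pos_left hM).1 ((abs_nonneg _).trans (hbound s))
  have := norm_le_norm_mul_exp_of_norm_deriv_le hg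
    (fun s => by simpa only [Real.norm_eq_abs, abs_of_nonneg (hg0 s)] using hbound s) a b
  simp only [Real.norm_eq_abs, abs_of_nonneg (hg0 _)] at this
  calc g b ≤ g a * exp (M * |b - a|) := this
    _ ≤ g a * exp 1 := by gcongr; exact hg0 a
    _ = exp 1 * g a := mul_comm _ _

theorem monotoneOn_of_hasDerivAt_nonneg {D : Set ℝ} (hD : Convex ℝ D) {ψ ψ' : ℝ → ℝ}
    (hψ : ∀ u, HasDerivAt ψ (ψ' u) u) (hψ' : ∀ u ∈ D, 0 ≤ ψ' u) : MonotoneOn ψ D :=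
  monotoneOn_of_hasDerivWithinAt_nonneg hD
    (continuous_iff_continuousAt.2 fun u => (hψ u).continuousAt).continuousOn
    (fun u _ => (hψ u).hasDerivWithinAt) fun u hu => hψ' u (interior_subset hu)

theorem add_add_half_le_of_le_hasDerivAt_hasDerivAt {φ φ' φ'' : ℝ → ℝ} {c : ℝ}
    (hφ : ∀ u, HasDerivAt φ (φ' u) u) (hφ' : ∀ u, HasDerivAt φ' (φ'' u) u)
    (hc : ∀ u ∈ Icc (0 : ℝ) 1, c ≤ φ'' u) :
    φ 0 + φ' 0 + c / 2 ≤ φ 1 := by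
  have hslope : ∀ u ∈ Icc (0 : ℝ) 1, 0 ≤ φ' u - φ' 0 - c * u := by
    have hmono : MonotoneOn (fun u => φ' u - c * u) (Icc 0 1) :=
      monotoneOn_of_hasDerivAt_nonneg (convex_Icc 0 1)
        (fun u => ((hφ' u).sub ((hasDerivAt_id u).const_mul c)).congr_deriv (by ring))
        fun u hu => sub_nonneg.2 (hc u hu)
    intro u hu
    have := hmono (left_mem_Icc.2 zero_le_one) hu hu.1
    simp only [mul_zero, sub_zero] at this
    linarith
  have hmono : MonotoneOn (fun u => φ u - φ' 0 * u - c * u ^ 2 / 2) (Icc 0 1) :=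
    monotoneOn_of_hasDerivAt_nonneg (convex_Icc 0 1)
      (fun u => (((hφ u).sub ((hasDerivAt_id u).const_mul (φ' 0))).sub
        (((hasDerivAt_pow 2 u).const_mul c).div_const 2)).congr_deriv (by push_cast; ring))
      hslope
  have := hmono (left_mem_Icc.2 zero_le_one) (right_mem_Icc.2 zero_le_one) zero_le_one
  norm_num at this
  linarith

theorem hasDerivAt_comp_sub_mul {g : ℝ → ℝ} (hg : Differentiable ℝ g) (x t u : ℝ) :
    HasDerivAt (fun u => g (x - u * t)) (-t * deriv g (x - u * t)) u := by
  have := (hg (x - u * t)).hasDerivAt.comp u (((hasDerivAt_id u).mul_const t).const_sub x)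
  exact this.congr_deriv (by ring)

theorem le_sub_apply_sub_of_le_deriv_deriv {f : ℝ → ℝ} {x t K : ℝ}
    (hf : Differentiable ℝ f) (hf' : Differentiable ℝ (deriv f))
    (hK : ∀ s ∈ Icc (0 : ℝ) 1, K ≤ deriv (deriv f) (x - s * t)) :
    f x - f (x - t) ≤ deriv f x * t - K * t ^ 2 / 2 := by
  have := add_add_half_le_of_le_hasDerivAt_hasDerivAt (c := K * t ^ 2)
    (hasDerivAt_comp_sub_mul hf x t)
    (fun u => (hasDerivAt_comp_sub_mul hf' x t u).const_mul (-t))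
    fun s hs => by nlinarith [hK s hs, sq_nonneg t]
  simp only [zero_mul, sub_zero, one_mul] at this
  linarith

theorem sub_apply_sub_le_of_deriv_deriv_le {f : ℝ → ℝ} {x t K : ℝ}
    (hf : Differentiable ℝ f) (hf' : Differentiable ℝ (deriv f))
    (hK : ∀ s ∈ Icc (0 : ℝ) 1, deriv (deriv f) (x - s * t) ≤ K) :
    deriv f x * t - K * t ^ 2 / 2 ≤ f x - f (x - t) := by
  have := add_add_half_le_of_le_hasDerivAt_hasDerivAt (c := -(K * t ^ 2))
    (fun u => (hasDerivAt_comp_sub_mul hf x t u).neg)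
    (fun u => ((hasDerivAt_comp_sub_mul hf' x t u).const_mul (-t)).neg)
    fun s hs => by nlinarith [hK s hs, sq_nonneg t]
  simp only [Pi.neg_apply, zero_mul, sub_zero, one_mul] at this
  linarith

section QuasiSelfConcordant

variable {f : ℝ → ℝ} {M : ℝ} (hM : 0 < M) (hf : Differentiable ℝ f)
  (hf' : Differentiable ℝ (deriv f)) (hf'' : Differentiable ℝ (deriv (deriv f)))
  (hqsc : ∀ s, |deriv (deriv (deriv f)) s| ≤ M * deriv (deriv f) s)
include hM hf hf' hf'' hqsc

theorem sub_apply_sub_le_of_qsc {x t : ℝ} (ht : M * |t| ≤ 1) :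
    f x - f (x - t) ≤ deriv f x * t - (2 * exp 1)⁻¹ * (deriv (deriv f) x * t ^ 2) := by
  have hK : ∀ s ∈ Icc (0 : ℝ) 1,
      (exp 1)⁻¹ * deriv (deriv f) x ≤ deriv (deriv f) (x - s * t) := by
    intro s hs
    have hst : M * |x - (x - s * t)| ≤ 1 := by
      rw [sub_sub_cancel, abs_mul, abs_of_nonneg hs.1]
      linarith [mul_le_mul_of_nonneg_left ht hs.1, hs.2]
    rw [inv_mul_le_iff₀ (exp_pos 1)]
    exact le_exp_one_mul_of_abs_deriv_le hM hf'' hqsc hst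
  have := le_sub_apply_sub_of_le_deriv_deriv hf hf' hK
  rw [mul_inv]
  linarith

theorem le_sub_apply_sub_exp_neg_two_mul_of_qsc {x t : ℝ} (ht : M * |t| ≤ 1) :
    exp (-2) * (deriv f x * t - (2 * exp 1)⁻¹ * (deriv (deriv f) x * t ^ 2)) ≤
      f x - f (x - exp (-2) * t) := by
  have hK : ∀ s ∈ Icc (0 : ℝ) 1, deriv (deriv f) (x - s * (exp (-2) * t)) ≤
      exp 1 * deriv (deriv f) x := by
    intro s hs
    have hs' : s * exp (-2) ≤ 1 :=
      mul_le_one₀ hs.2 (exp_pos _).le (exp_le_one_iff.2 (by norm_num))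
    have hst : M * |x - s * (exp (-2) * t) - x| ≤ 1 := by
      rw [sub_sub_cancel_left, abs_neg, ← mul_assoc, abs_mul,
        abs_of_nonneg (mul_nonneg hs.1 (exp_pos _).le)]
      linarith [mul_le_mul_of_nonneg_left ht (mul_nonneg hs.1 (exp_pos (-2)).le)]
    exact le_exp_one_mul_of_abs_deriv_le hM hf'' hqsc hst
  have := sub_apply_sub_le_of_deriv_deriv_le hf hf' hK
  have hexp : exp 1 * exp (-2) ^ 2 = exp (-2) * (exp 1)⁻¹ := by
    rw [← exp_neg, sq, ← exp_add, ← exp_add, ← exp_add]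
    norm_num
  rw [mul_inv]
  linear_combination this + (deriv (deriv f) x * t ^ 2 / 2) * hexp

end QuasiSelfConcordant

theorem qsc_residual_bounds_general
    (m : ℕ) (M : ℝ) (hM : 0 < M) (f : ℝ → ℝ)
    (hf : ContDiff ℝ 3 f)
    (hqsc : ∀ s : ℝ, |deriv (deriv (deriv f)) s| ≤ M * deriv (deriv f) s)
    (x δ : Fin m → ℝ) (hδ : ‖δ‖ ≤ 1 / M) :
    ((∑ i, f (x i)) - (∑ i, f (x i - δ i)) ≤
      (∑ i, deriv f (x i) * δ i) -
        (2 * Real.exp 1)⁻¹ * ∑ i, deriv (deriv f) (x i) * δ i ^ 2) ∧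
    ((∑ i, f (x i)) - (∑ i, f (x i - Real.exp (-2) * δ i)) ≥
      Real.exp (-2) * ((∑ i, deriv f (x i) * δ i) -
        (2 * Real.exp 1)⁻¹ * ∑ i, deriv (deriv f) (x i) * δ i ^ 2)) := by
  have hf₀ : Differentiable ℝ f := hf.differentiable (by norm_num)
  have hf₁ : Differentiable ℝ (deriv f) := by
    simpa only [iteratedDeriv_one] using hf.differentiable_iteratedDeriv 1 (by norm_num)
  have hf₂ : Differentiable ℝ (deriv (deriv f)) := by
    simpa only [iteratedDeriv_succ, iteratedDeriv_zero] using
      hf.differentiable_iteratedDeriv 2 (by norm_num)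
  have hδi : ∀ i, M * |δ i| ≤ 1 := fun i => by
    rw [← le_div_iff₀' hM, ← Real.norm_eq_abs]
    exact (norm_le_pi_norm δ i).trans hδ
  simp only [← Finset.sum_sub_distrib, Finset.mul_sum, ge_iff_le]
  exact ⟨Finset.sum_le_sum fun i _ => sub_apply_sub_le_of_qsc hM hf₀ hf₁ hf₂ hqsc (hδi i),
    Finset.sum_le_sum fun i _ =>
      le_sub_apply_sub_exp_neg_two_mul_of_qsc hM hf₀ hf₁ hf₂ hqsc (hδi i)⟩

/-- Lemma B.3 (with corrected constants): residual bounds for q.s.c. functions. -/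
theorem qsc_residual_bounds
    (m : ℕ) (M : ℝ) (hM : 0 < M) (f : ℝ → ℝ)
    (hconv : ConvexOn ℝ Set.univ f) (hf : ContDiff ℝ 3 f)
    (hqsc : ∀ s : ℝ, |deriv (deriv (deriv f)) s| ≤ M * deriv (deriv f) s)
    (x δ : Fin m → ℝ) (hδ : ‖δ‖ ≤ 1 / M) :
    ((∑ i, f (x i)) - (∑ i, f (x i - δ i)) ≤
      (∑ i, deriv f (x i) * δ i) -
        (2 * Real.exp 1)⁻¹ * ∑ i, deriv (deriv f) (x i) * δ i ^ 2) ∧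
    ((∑ i, f (x i)) - (∑ i, f (x i - Real.exp (-2) * δ i)) ≥
      Real.exp (-2) * ((∑ i, deriv f (x i) * δ i) -
        (2 * Real.exp 1)⁻¹ * ∑ i, deriv (deriv f) (x i) * δ i ^ 2)) :=
  qsc_residual_bounds_general m M hM f hf hqsc x δ hδ
end

section
/- Let M > 0, R ≥ 1/(2M), let P be a real m×n matrix, and let x ∈ ℝ^n with ‖Px‖_∞ ≤ R. Define z = z(x) ∈ ℝ^m by: z_i = −1/(2M) + R + (Px)_i if (Px)_i − 1/(2M) < −R; z_i = −R + (Px)_i + 1/(2M) if (Px)_i + 1/(2M) > R; and z_i = 0 otherwise. Then for every Δ ∈ ℝ^n with ‖PΔ − z‖_∞ ≤ 1/(2M), one has ‖PΔ‖_∞ ≤ 1/M and ‖Px − e^{−2}·PΔ‖_∞ ≤ R. -/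
/-- The shift vector z(x) of the residual problem. -/
noncomputable def zShift (m n : ℕ) (P : Matrix (Fin m) (Fin n) ℝ)
    (M R : ℝ) (x : Fin n → ℝ) : Fin m → ℝ := fun i =>
  if (P.mulVec x) i - 1 / (2 * M) < -R then
    -(1 / (2 * M)) + R + (P.mulVec x) i
  else if R < (P.mulVec x) i + 1 / (2 * M) then
    -R + (P.mulVec x) i + 1 / (2 * M)
  else 0

/-- One coordinate of `zShift`, with `a = 1/(2M)`: the shift moving the box `[y - a, y + a]`
back inside `[-R, R]` whenever it sticks out. -/
noncomputable def boxShift (a R y : ℝ) : ℝ :=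
  if y - a < -R then -a + R + y else if R < y + a then -R + y + a else 0

section boxShift

variable {a R y w : ℝ}

theorem abs_le_two_mul_of_abs_sub_boxShift_le (hy : |y| ≤ R) (hw : |w - boxShift a R y| ≤ a) :
    |w| ≤ 2 * a := by
  rw [abs_le] at hy hw ⊢
  unfold boxShift at hw
  split_ifs at hw <;> constructor <;> linarith

-- If `y - a < -R` then `w ∈ [y + R - 2a, y + R]`, so `y - c * w` lies between `(1 - c) y - c R`
-- and `(1 - c) y - c (R - 2a)`, both in `[-R, R]` because `a ≤ R`; the case `R < y + a` is symmetric.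
theorem abs_sub_mul_le_of_abs_sub_boxShift_le {c : ℝ} (hc₀ : 0 ≤ c) (hc₁ : c ≤ 1)
    (haR : a ≤ R) (hy : |y| ≤ R) (hw : |w - boxShift a R y| ≤ a) :
    |y - c * w| ≤ R := by
  rw [abs_le] at hy hw ⊢
  unfold boxShift at hw
  split_ifs at hw <;> constructor <;> nlinarith

end boxShift

section boxShiftVec

variable {ι : Type*} [Fintype ι] {a R : ℝ} {y w : ι → ℝ}

theorem norm_le_two_mul_of_norm_sub_boxShift_le (hy : ‖y‖ ≤ R)
    (hw : ‖w - fun i => boxShift a R (y i)‖ ≤ a) : ‖w‖ ≤ 2 * a := by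
  have ha : 0 ≤ a := (norm_nonneg _).trans hw
  refine (pi_norm_le_iff_of_nonneg (by positivity)).2 fun i => ?_
  exact abs_le_two_mul_of_abs_sub_boxShift_le ((norm_le_pi_norm y i).trans hy)
    ((norm_le_pi_norm _ i).trans hw)

theorem norm_sub_smul_le_of_norm_sub_boxShift_le {c : ℝ} (hc₀ : 0 ≤ c) (hc₁ : c ≤ 1)
    (haR : a ≤ R) (hy : ‖y‖ ≤ R) (hw : ‖w - fun i => boxShift a R (y i)‖ ≤ a) :
    ‖y - c • w‖ ≤ R := by
  refine (pi_norm_le_iff_of_nonneg ((norm_nonneg y).trans hy)).2 fun i => ?_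
  exact abs_sub_mul_le_of_abs_sub_boxShift_le hc₀ hc₁ haR ((norm_le_pi_norm y i).trans hy)
    ((norm_le_pi_norm _ i).trans hw)

end boxShiftVec

theorem residual_box_feasible_general
    (m n : ℕ) (M R : ℝ) (hR : 1 / (2 * M) ≤ R)
    (P : Matrix (Fin m) (Fin n) ℝ) (x : Fin n → ℝ)
    (hx : ‖P.mulVec x‖ ≤ R) :
    ∀ Δ : Fin n → ℝ, ‖P.mulVec Δ - zShift m n P M R x‖ ≤ 1 / (2 * M) →
      ‖P.mulVec Δ‖ ≤ 1 / M ∧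
      ‖P.mulVec x - Real.exp (-2) • P.mulVec Δ‖ ≤ R := by
  intro Δ hΔ
  have hexp : Real.exp (-2) ≤ 1 := Real.exp_le_one_iff.2 (by norm_num)
  constructor
  · calc ‖P.mulVec Δ‖ ≤ 2 * (1 / (2 * M)) := norm_le_two_mul_of_norm_sub_boxShift_le hx hΔ
      _ = 1 / M := by ring
  · exact norm_sub_smul_le_of_norm_sub_boxShift_le (Real.exp_nonneg _) hexp hR hx hΔ

/-- Feasible points for the box constraint of the residual problem satisfy
‖PΔ‖_∞ ≤ 1/M and ‖Px − e⁻²·PΔ‖_∞ ≤ R. -/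
theorem residual_box_feasible
    (m n : ℕ) (M R : ℝ) (hM : 0 < M) (hR : 1 / (2 * M) ≤ R)
    (P : Matrix (Fin m) (Fin n) ℝ) (x : Fin n → ℝ)
    (hx : ‖P.mulVec x‖ ≤ R) :
    ∀ Δ : Fin n → ℝ, ‖P.mulVec Δ - zShift m n P M R x‖ ≤ 1 / (2 * M) →
      ‖P.mulVec Δ‖ ≤ 1 / M ∧
      ‖P.mulVec x - Real.exp (-2) • P.mulVec Δ‖ ≤ R :=
  residual_box_feasible_general m n M R hR P x hx
end

section
/- Let A be a real d×n matrix, b ∈ ℝ^d, P a real m×n matrix, M > 0, R ≥ 1/(2M), and let f : ℝ → ℝ be convex, three times differentiable with continuous third derivative, and M-quasi-self-concordant. Let F(y) = ∑_{i=1}^m f(y_i), let x* minimize F(Px) over {x : Ax = b} with ‖Px*‖_∞ ≤ R, and let x ∈ ℝ^n satisfy Ax = b and ‖Px‖_∞ ≤ R. Define res_x(Δ) = ∑_i f'((Px)_i)(PΔ)_i − (2e)^{−1}∑_i f''((Px)_i)(PΔ)_i². Then sup{ res_x(Δ) : AΔ = 0, ‖PΔ − z(x)‖_∞ ≤ 1/(2M)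 } ≥ (1/(4MR))·( F(Px) − F(Px*) ). -/
/-- The residual objective res_x(Δ) (with the corrected constant (2e)⁻¹). -/
noncomputable def resObj (m n : ℕ) (P : Matrix (Fin m) (Fin n) ℝ)
    (f : ℝ → ℝ) (x Δ : Fin n → ℝ) : ℝ :=
  (∑ i, deriv f ((P.mulVec x) i) * (P.mulVec Δ) i) -
    (2 * Real.exp 1)⁻¹ * ∑ i, deriv (deriv f) ((P.mulVec x) i) * (P.mulVec Δ) i ^ 2

open Real Set

section QuasiSelfConcordance

variable {g : ℝ → ℝ} {M : ℝ}

theorem nonneg_of_abs_deriv_le_mul (hM : 0 < M) (hbound : ∀ s, |deriv g s| ≤ M * g s)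
    (s : ℝ) : 0 ≤ g s :=
  nonneg_of_mul_nonneg_right ((abs_nonneg _).trans (hbound s)) hM

theorem le_mul_exp_of_abs_deriv_le_of_le (hg : Differentiable ℝ g)
    (hbound : ∀ s, |deriv g s| ≤ M * g s) {a s : ℝ} (has : a ≤ s) :
    g a ≤ g s * exp (M * (s - a)) := by
  have hderiv : ∀ t, HasDerivAt (fun t => g t * exp (M * (t - a)))
      (deriv g t * exp (M * (t - a)) + g t * (exp (M * (t - a)) * (M * (1 - 0)))) t := fun t =>
    (hg t).hasDerivAt.mul ((((hasDerivAt_id t).sub (hasDerivAt_const t a)).const_mul M).exp)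
  have hmono : Monotone fun t => g t * exp (M * (t - a)) := by
    refine monotone_of_hasDerivAt_nonneg hderiv fun t => ?_
    have hlower := neg_le_of_abs_le (hbound t)
    simp only [Pi.zero_apply]
    nlinarith [exp_pos (M * (t - a))]
  simpa using hmono has

theorem le_mul_exp_abs_of_abs_deriv_le (hg : Differentiable ℝ g)
    (hbound : ∀ s, |deriv g s| ≤ M * g s) (a s : ℝ) :
    g a ≤ g s * exp (M * |s - a|) := by
  rcases le_total a s with has | hsa
  · simpa [abs_of_nonneg (sub_nonneg.2 has)] using le_mul_exp_of_abs_deriv_le_of_le hg hbound has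
  · have hbound_neg : ∀ t, |deriv (fun t => g (-t)) t| ≤ M * g (-t) := fun t => by
      simpa [deriv_comp_neg] using hbound (-t)
    simpa [abs_of_nonpos (sub_nonpos.2 hsa), ← sub_eq_neg_add] using
      le_mul_exp_of_abs_deriv_le_of_le (hg.comp differentiable_neg) hbound_neg (neg_le_neg hsa)

end QuasiSelfConcordance

section Taylor

variable {f : ℝ → ℝ} {M : ℝ}

theorem taylor_lower_bound_of_abs_deriv3_le (hM : 0 < M) (hf : ContDiff ℝ 3 f)
    (hqsc : ∀ s, |deriv (deriv (deriv f)) s| ≤ M * deriv (deriv f) s) (a : ℝ) {t : ℝ}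
    (ht : M * |t| ≤ 1) :
    f a + deriv f a * t + (2 * exp 1)⁻¹ * (deriv (deriv f) a * t ^ 2) ≤ f (a + t) := by
  rcases eq_or_ne t 0 with rfl | ht0
  · simp
  have hne : a ≠ a + t := by simpa using ht0
  obtain ⟨ξ, hξ, hrem⟩ := taylor_mean_remainder_lagrange_iteratedDeriv (n := 1) hne
    (hf.contDiffOn.of_le (by norm_num))
  have hderiv : derivWithin f (uIcc a (a + t)) a = deriv f a :=
    ((hf.differentiable (by norm_num)) a).derivWithin (uniqueDiffOn_uIcc hne a left_mem_uIcc)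
  have hlagrange : f (a + t) = f a + deriv f a * t + deriv (deriv f) ξ * t ^ 2 / 2 := by
    simp only [taylorWithinEval_succ, taylor_within_zero_eval, iteratedDerivWithin_one, hderiv,
      iteratedDeriv_succ, iteratedDeriv_zero, Nat.factorial_zero, Nat.cast_zero, Nat.cast_one,
      zero_add, mul_one, inv_one, one_mul, smul_eq_mul, pow_one, add_sub_cancel_left] at hrem
    linarith
  have hξa : M * |ξ - a| ≤ 1 :=
    (mul_le_mul_of_nonneg_left (abs_sub_left_of_mem_uIcc (uIoo_subset_uIcc_self hξ)) hM.le).trans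
      (by simpa using ht)
  have hcompare : deriv (deriv f) a ≤ deriv (deriv f) ξ * exp 1 :=
    (le_mul_exp_abs_of_abs_deriv_le ((hf.iterate_deriv' 1 2).differentiable one_ne_zero)
      hqsc a ξ).trans
      (mul_le_mul_of_nonneg_left (exp_le_exp.2 hξa) (nonneg_of_abs_deriv_le_mul hM hqsc ξ))
  have hquad : (2 * exp 1)⁻¹ * (deriv (deriv f) a * t ^ 2) ≤ deriv (deriv f) ξ * t ^ 2 / 2 := by
    rw [inv_mul_le_iff₀ (by positivity)]
    linarith [mul_le_mul_of_nonneg_right hcompare (sq_nonneg t)]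
  linarith

theorem mul_sub_le_of_abs_deriv3_le (hM : 0 < M) (hconv : ConvexOn ℝ univ f)
    (hf : ContDiff ℝ 3 f) (hqsc : ∀ s, |deriv (deriv (deriv f)) s| ≤ M * deriv (deriv f) s)
    {η a b : ℝ} (hη0 : 0 ≤ η) (hη1 : η ≤ 1) (hab : M * |η * (b - a)| ≤ 1) :
    η * (f a - f b) ≤
      deriv f a * (η * (a - b)) - (2 * exp 1)⁻¹ * (deriv (deriv f) a * (η * (a - b)) ^ 2) := by
  have htaylor := taylor_lower_bound_of_abs_deriv3_le hM hf hqsc a hab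
  have hchord : f ((1 - η) • a + η • b) ≤ (1 - η) • f a + η • f b :=
    hconv.2 (mem_univ a) (mem_univ b) (sub_nonneg.2 hη1) hη0 (by ring)
  simp only [smul_eq_mul] at hchord
  rw [show a + η * (b - a) = (1 - η) * a + η * b by ring] at htaylor
  linarith

end Taylor

theorem abs_mul_sub_sub_shift_le {R c η p q : ℝ} (hη0 : 0 ≤ η) (hη1 : η ≤ 1)
    (hηc : η * (2 * R) = c) (hp : |p| ≤ R) (hq : |q| ≤ R) :
    |η * (p - q) - (if p - c < -R then -c + R + p else if R < p + c then -R + p + c else 0)| ≤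
      c := by
  obtain ⟨hp₁, hp₂⟩ := abs_le.1 hp
  obtain ⟨hq₁, hq₂⟩ := abs_le.1 hq
  have hlo : -c ≤ η * (p - q) := by nlinarith
  have hhi : η * (p - q) ≤ c := by nlinarith
  rw [abs_le]
  split_ifs
  · constructor <;> nlinarith
  · constructor <;> nlinarith
  · exact ⟨by linarith, by linarith⟩

section Residual

variable {m n : ℕ} {P : Matrix (Fin m) (Fin n) ℝ} {R : ℝ}

theorem abs_mulVec_apply_le {x : Fin n → ℝ} (hx : ‖P.mulVec x‖ ≤ R) (i : Fin m) :
    |P.mulVec x i| ≤ R :=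
  (norm_le_pi_norm (P.mulVec x) i).trans hx

theorem mulVec_smul_sub_apply (η : ℝ) (x y : Fin n → ℝ) (i : Fin m) :
    P.mulVec (η • (x - y)) i = η * (P.mulVec x i - P.mulVec y i) := by
  simp [Matrix.mulVec_smul, Matrix.mulVec_sub]

theorem norm_mulVec_smul_sub_sub_zShift_le {M η : ℝ} {x y : Fin n → ℝ}
    (hx : ‖P.mulVec x‖ ≤ R) (hy : ‖P.mulVec y‖ ≤ R) (hη0 : 0 ≤ η) (hη1 : η ≤ 1)
    (hηR : η * (2 * R) = 1 / (2 * M)) :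
    ‖P.mulVec (η • (x - y)) - zShift m n P M R x‖ ≤ 1 / (2 * M) := by
  refine (pi_norm_le_iff_of_nonneg
    (hηR ▸ mul_nonneg hη0 (by linarith [norm_nonneg (P.mulVec x)]))).2 fun i => ?_
  rw [Real.norm_eq_abs, Pi.sub_apply, mulVec_smul_sub_apply]
  exact abs_mul_sub_sub_shift_le hη0 hη1 hηR (abs_mulVec_apply_le hx i) (abs_mulVec_apply_le hy i)

theorem resObj_le {f : ℝ → ℝ} (hf2 : ∀ s, 0 ≤ deriv (deriv f) s) {x Δ : Fin n → ℝ}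
    {z : Fin m → ℝ} {r : ℝ} (hΔ : ‖P.mulVec Δ - z‖ ≤ r) :
    resObj m n P f x Δ ≤ (∑ i, |deriv f (P.mulVec x i)|) * (r + ‖z‖) := by
  have hquad : 0 ≤ (2 * exp 1)⁻¹ * ∑ i, deriv (deriv f) (P.mulVec x i) * P.mulVec Δ i ^ 2 :=
    mul_nonneg (by positivity) (Finset.sum_nonneg fun i _ => mul_nonneg (hf2 _) (sq_nonneg _))
  have hnorm : ‖P.mulVec Δ‖ ≤ r + ‖z‖ := (norm_le_norm_sub_add _ z).trans (by linarith)
  have hlin : ∑ i, deriv f (P.mulVec x i) * P.mulVec Δ i ≤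
      ∑ i, |deriv f (P.mulVec x i)| * (r + ‖z‖) := by
    refine Finset.sum_le_sum fun i _ => ?_
    calc deriv f (P.mulVec x i) * P.mulVec Δ i
        ≤ |deriv f (P.mulVec x i)| * |P.mulVec Δ i| := (le_abs_self _).trans (abs_mul _ _).le
      _ ≤ |deriv f (P.mulVec x i)| * (r + ‖z‖) :=
        mul_le_mul_of_nonneg_left ((norm_le_pi_norm _ i).trans hnorm) (abs_nonneg _)
  rw [resObj, Finset.sum_mul]
  linarith

theorem mul_sub_le_resObj {f : ℝ → ℝ} {M η : ℝ} (hM : 0 < M) (hconv : ConvexOn ℝ univ f)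
    (hf : ContDiff ℝ 3 f) (hqsc : ∀ s, |deriv (deriv (deriv f)) s| ≤ M * deriv (deriv f) s)
    {x y : Fin n → ℝ} (hx : ‖P.mulVec x‖ ≤ R) (hy : ‖P.mulVec y‖ ≤ R) (hη0 : 0 ≤ η)
    (hη1 : η ≤ 1) (hηR : M * (η * (2 * R)) ≤ 1) :
    η * ((∑ i, f (P.mulVec x i)) - ∑ i, f (P.mulVec y i)) ≤ resObj m n P f x (η • (x - y)) := by
  have hstep : ∀ i, M * |η * (P.mulVec y i - P.mulVec x i)| ≤ 1 := fun i => by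
    rw [abs_mul, abs_of_nonneg hη0]
    refine le_trans (mul_le_mul_of_nonneg_left (mul_le_mul_of_nonneg_left ?_ hη0) hM.le) hηR
    linarith [abs_sub (P.mulVec y i) (P.mulVec x i), abs_mulVec_apply_le hx i,
      abs_mulVec_apply_le hy i]
  simp only [resObj, mulVec_smul_sub_apply, Finset.mul_sum, ← Finset.sum_sub_distrib]
  exact Finset.sum_le_sum fun i _ => mul_sub_le_of_abs_deriv3_le hM hconv hf hqsc hη0 hη1 (hstep i)

end Residual

theorem residual_lower_bound_general
    (d n m : ℕ) (A : Matrix (Fin d) (Fin n) ℝ) (b : Fin d → ℝ)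
    (P : Matrix (Fin m) (Fin n) ℝ) (M R : ℝ) (hM : 0 < M) (hR : 1 / (2 * M) ≤ R)
    (f : ℝ → ℝ) (hconv : ConvexOn ℝ Set.univ f) (hf : ContDiff ℝ 3 f)
    (hqsc : ∀ s : ℝ, |deriv (deriv (deriv f)) s| ≤ M * deriv (deriv f) s)
    (xstar : Fin n → ℝ) (hxsA : A.mulVec xstar = b)
    (hxsR : ‖P.mulVec xstar‖ ≤ R)
    (x : Fin n → ℝ) (hxA : A.mulVec x = b) (hxR : ‖P.mulVec x‖ ≤ R) :
    sSup {v : ℝ | ∃ Δ : Fin n → ℝ, A.mulVec Δ = 0 ∧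
        ‖P.mulVec Δ - zShift m n P M R x‖ ≤ 1 / (2 * M) ∧
        v = resObj m n P f x Δ} ≥
      1 / (4 * M * R) *
        ((∑ i, f ((P.mulVec x) i)) - ∑ i, f ((P.mulVec xstar) i)) := by
  have hRpos : 0 < R := lt_of_lt_of_le (by positivity) hR
  have h2MR : 1 ≤ R * (2 * M) := (div_le_iff₀ (by positivity)).1 hR
  set η := 1 / (4 * M * R)
  have hη0 : 0 ≤ η := by positivity
  have hη1 : η ≤ 1 := (div_le_one (by positivity)).2 (by linarith)
  have hηR : η * (2 * R) = 1 / (2 * M) := by simp only [η]; field_simp; ring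
  have hAΔ : A.mulVec (η • (x - xstar)) = 0 := by
    rw [Matrix.mulVec_smul, Matrix.mulVec_sub, hxA, hxsA, sub_self, smul_zero]
  have hbdd : BddAbove {v : ℝ | ∃ Δ : Fin n → ℝ, A.mulVec Δ = 0 ∧
      ‖P.mulVec Δ - zShift m n P M R x‖ ≤ 1 / (2 * M) ∧ v = resObj m n P f x Δ} := by
    refine ⟨(∑ i, |deriv f (P.mulVec x i)|) * (1 / (2 * M) + ‖zShift m n P M R x‖), ?_⟩
    rintro _ ⟨Δ, -, hΔ, rfl⟩
    exact resObj_le (nonneg_of_abs_deriv_le_mul hM hqsc) hΔ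
  have hstep : M * (η * (2 * R)) ≤ 1 := by
    rw [hηR, mul_one_div, div_le_one (by positivity)]
    linarith
  exact (mul_sub_le_resObj hM hconv hf hqsc hxR hxsR hη0 hη1 hstep).trans
    (le_csSup hbdd ⟨_, hAΔ, norm_mulVec_smul_sub_sub_zShift_le hxR hxsR hη0 hη1 hηR, rfl⟩)

/-- Lemma B.4: the optimal residual value is at least (1/(4MR))·(F(Px) − F(Px*)). -/
theorem residual_lower_bound
    (d n m : ℕ) (A : Matrix (Fin d) (Fin n) ℝ) (b : Fin d → ℝ)
    (P : Matrix (Fin m) (Fin n) ℝ) (M R : ℝ) (hM : 0 < M) (hR : 1 / (2 * M) ≤ R)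
    (f : ℝ → ℝ) (hconv : ConvexOn ℝ Set.univ f) (hf : ContDiff ℝ 3 f)
    (hqsc : ∀ s : ℝ, |deriv (deriv (deriv f)) s| ≤ M * deriv (deriv f) s)
    (xstar : Fin n → ℝ) (hxsA : A.mulVec xstar = b)
    (hxsR : ‖P.mulVec xstar‖ ≤ R)
    (hxsopt : ∀ x' : Fin n → ℝ, A.mulVec x' = b →
      (∑ i, f ((P.mulVec xstar) i)) ≤ ∑ i, f ((P.mulVec x') i))
    (x : Fin n → ℝ) (hxA : A.mulVec x = b) (hxR : ‖P.mulVec x‖ ≤ R) :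
    sSup {v : ℝ | ∃ Δ : Fin n → ℝ, A.mulVec Δ = 0 ∧
        ‖P.mulVec Δ - zShift m n P M R x‖ ≤ 1 / (2 * M) ∧
        v = resObj m n P f x Δ} ≥
      1 / (4 * M * R) *
        ((∑ i, f ((P.mulVec x) i)) - ∑ i, f ((P.mulVec xstar) i)) :=
  residual_lower_bound_general d n m A b P M R hM hR f hconv hf hqsc xstar hxsA hxsR x hxA hxR
end

section
/- Let A be a real d×n matrix, b ∈ ℝ^d, P a real m×n matrix, M > 0, R ≥ 1/(2M), κ ≥ 1, and let f : ℝ → ℝ be convex, three times differentiable with continuous third derivative, and M-quasi-self-concordant. Let F(y) = ∑_{i=1}^m f(y_i), and let x* minimize F(Px) over {x : Ax = b} with ‖Px*‖_∞ ≤ R. Let x^{(0)} satisfy A x^{(0)} = b and ‖P x^{(0)}‖_∞ ≤ R, and suppose that for each t, Δ̃^{(t)} satisfies A Δ̃^{(t)} = 0, ‖P Δ̃^{(t)} − z(x^{(t)})‖_∞ ≤ 1/(2M), and res_{x^{(t)}}(Δ̃^{(t)}) ≥ (1/κ)·sup{ res_{x^{(t)}}(Δ) : AΔ = 0, ‖PΔ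 − z(x^{(t)})‖_∞ ≤ 1/(2M) }, where x^{(t+1)} = x^{(t)} − e^{−2}·Δ̃^{(t)}. Then for every T ≥ 0: A x^{(T)} = b, ‖P x^{(T)}‖_∞ ≤ R, and F(P x^{(T)}) − F(P x*) ≤ (1 − e^{−2}/(4κMR))^T · ( F(P x^{(0)}) − F(P x*) ). -/
open scoped BigOperators

open Set


open Set

lemma hda_conv {f g : ℝ → ℝ} {f' g' x : ℝ} (h : HasDerivAt g g' x) (hf : f = g) (hd : f' = g') :
    HasDerivAt f f' x := hf ▸ hd ▸ h

/-- If `φ 0 = 0`, `φ' 0 = 0` and `φ'' ≥ 0` on `[a,b] ∋ 0`, then `φ ≥ 0` on `[a,b]`. -/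
lemma convex_like_nonneg (a b : ℝ) (ha : a ≤ 0) (hb : 0 ≤ b) (φ φ' φ'' : ℝ → ℝ)
    (h1 : ∀ u, HasDerivAt φ (φ' u) u) (h2 : ∀ u, HasDerivAt φ' (φ'' u) u)
    (hφ0 : φ 0 = 0) (hφ'0 : φ' 0 = 0) (hpos : ∀ u ∈ Icc a b, 0 ≤ φ'' u) :
    ∀ u ∈ Icc a b, 0 ≤ φ u := by
  have hmono : MonotoneOn φ' (Icc a b) := by
    apply monotoneOn_of_deriv_nonneg (convex_Icc a b)
      (fun u _ => ((h2 u).continuousAt).continuousWithinAt)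
      (fun u _ => ((h2 u).differentiableAt).differentiableWithinAt)
    intro u hu
    rw [(h2 u).deriv]
    exact hpos u (interior_subset hu)
  intro u hu
  rcases le_total 0 u with h0u | hu0
  · have hm2 : MonotoneOn φ (Icc 0 u) := by
      apply monotoneOn_of_deriv_nonneg (convex_Icc 0 u)
        (fun v _ => ((h1 v).continuousAt).continuousWithinAt)
        (fun v _ => ((h1 v).differentiableAt).differentiableWithinAt)
      intro v hv
      rw [(h1 v).deriv, ← hφ'0]
      have hv' : v ∈ Icc a b := by
        rcases (interior_subset hv : v ∈ Icc 0 u) with ⟨h1', h2'⟩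
        exact ⟨le_trans ha h1', le_trans h2' hu.2⟩
      exact hmono ⟨ha, hb⟩ hv' (interior_subset hv : v ∈ Icc 0 u).1
    have := hm2 ⟨le_refl 0, h0u⟩ ⟨h0u, le_refl u⟩ h0u
    simpa [hφ0] using this
  · have hm2 : AntitoneOn φ (Icc u 0) := by
      apply antitoneOn_of_deriv_nonpos (convex_Icc u 0)
        (fun v _ => ((h1 v).continuousAt).continuousWithinAt)
        (fun v _ => ((h1 v).differentiableAt).differentiableWithinAt)
      intro v hv
      rw [(h1 v).deriv, ← hφ'0]
      have hv' : v ∈ Icc a b := by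
        rcases (interior_subset hv : v ∈ Icc u 0) with ⟨h1', h2'⟩
        exact ⟨le_trans hu.1 h1', le_trans h2' hb⟩
      exact hmono hv' ⟨ha, hb⟩ (interior_subset hv : v ∈ Icc u 0).2
    have := hm2 ⟨le_refl u, hu0⟩ ⟨hu0, le_refl 0⟩ hu0
    simpa [hφ0] using this

lemma diff_chain (f : ℝ → ℝ) (hf : ContDiff ℝ 3 f) :
    Differentiable ℝ f ∧ Differentiable ℝ (deriv f) ∧ Differentiable ℝ (deriv (deriv f)) := by
  have h3 : (3 : WithTop ℕ∞) = 2 + 1 := by norm_num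
  rw [h3, contDiff_succ_iff_deriv] at hf
  obtain ⟨hd1, -, hf2⟩ := hf
  have h2 : (2 : WithTop ℕ∞) = 1 + 1 := by norm_num
  rw [h2, contDiff_succ_iff_deriv] at hf2
  obtain ⟨hd2, -, hf1⟩ := hf2
  exact ⟨hd1, hd2, hf1.differentiable one_ne_zero⟩

lemma g2nn (M : ℝ) (hM : 0 < M) (f : ℝ → ℝ)
    (hqsc : ∀ s : ℝ, |deriv (deriv (deriv f)) s| ≤ M * deriv (deriv f) s) :
    ∀ s, 0 ≤ deriv (deriv f) s := by
  intro s
  have h := (abs_nonneg (deriv (deriv (deriv f)) s)).trans (hqsc s)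
  nlinarith

lemma gron_le (M : ℝ) (hM : 0 < M) (f : ℝ → ℝ) (hf : ContDiff ℝ 3 f)
    (hqsc : ∀ s : ℝ, |deriv (deriv (deriv f)) s| ≤ M * deriv (deriv f) s) :
    ∀ s t : ℝ, deriv (deriv f) t ≤ deriv (deriv f) s * Real.exp (M * |t - s|) := by
  obtain ⟨hd1, hd2, hd3⟩ := diff_chain f hf
  set g2 := deriv (deriv f) with hg2
  set g3 := deriv (deriv (deriv f)) with hg3
  have hg2nn : ∀ u, 0 ≤ g2 u := g2nn M hM f hqsc
  have fwd : ∀ s t : ℝ, s ≤ t → g2 t ≤ g2 s * Real.exp (M * (t - s)) := by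
    intro s t hst
    have key := norm_le_gronwallBound_of_norm_deriv_right_le (f := g2) (f' := g3)
      (δ := g2 s) (K := M) (ε := 0) (a := s) (b := t)
      (hd3.continuous.continuousOn)
      (fun u _ => (hd3 u).hasDerivAt.hasDerivWithinAt)
      (by rw [Real.norm_eq_abs, abs_of_nonneg (hg2nn s)])
      (fun u _ => by
        rw [Real.norm_eq_abs, Real.norm_eq_abs, abs_of_nonneg (hg2nn u), add_zero]
        exact hqsc u) t ⟨hst, le_refl t⟩
    rwa [gronwallBound_ε0, Real.norm_eq_abs, abs_of_nonneg (hg2nn t)] at key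
  intro s t
  rcases le_total s t with h | h
  · rw [abs_of_nonneg (by linarith)]; exact fwd s t h
  · -- backward: use reflected function w u = g2 (s + t - u) on [t, s]
    rw [abs_of_nonpos (by linarith)]
    set w : ℝ → ℝ := fun u => g2 (s + t - u) with hw
    have hwderiv : ∀ u, HasDerivAt w (-g3 (s + t - u)) u := by
      intro u
      have hinner : HasDerivAt (fun u : ℝ => s + t - u) (-1) u := by
        simpa using (hasDerivAt_id u).const_sub (s + t)
      have houter : HasDerivAt g2 (g3 (s + t - u)) (s + t - u) := (hd3 _).hasDerivAt
      have := houter.comp u hinner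
      simpa [mul_comm, Function.comp_def] using this
    have key := norm_le_gronwallBound_of_norm_deriv_right_le
      (f := w) (f' := fun u => -g3 (s + t - u))
      (δ := w t) (K := M) (ε := 0) (a := t) (b := s)
      ((hd3.continuous.comp (by continuity)).continuousOn)
      (fun u _ => (hwderiv u).hasDerivWithinAt)
      (by rw [Real.norm_eq_abs, abs_of_nonneg (hg2nn _)])
      (fun u _ => by
        rw [Real.norm_eq_abs, Real.norm_eq_abs, abs_neg, abs_of_nonneg (hg2nn _), add_zero]
        exact hqsc _) s ⟨h, le_refl s⟩
    have hwt : w t = g2 s := by simp [hw]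
    have hws : w s = g2 t := by simp [hw]
    rw [gronwallBound_ε0, Real.norm_eq_abs, abs_of_nonneg (hg2nn _), hwt] at key
    simp only [show s + t - s = t by ring] at key
    convert key using 3
    ring

lemma taylor_upper (M : ℝ) (hM : 0 < M) (f : ℝ → ℝ) (hf : ContDiff ℝ 3 f)
    (hqsc : ∀ s : ℝ, |deriv (deriv (deriv f)) s| ≤ M * deriv (deriv f) s) :
    ∀ s h : ℝ, M * |h| ≤ 1 →
      f (s + h) ≤ f s + deriv f s * h + (Real.exp 1 / 2) * deriv (deriv f) s * h ^ 2 := by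
  obtain ⟨hd1, hd2, hd3⟩ := diff_chain f hf
  have hg2nn := g2nn M hM f hqsc
  have hgron := gron_le M hM f hf hqsc
  intro s h hh
  set c := deriv (deriv f) s with hc
  set φ : ℝ → ℝ := fun u => f s + deriv f s * u + (Real.exp 1 / 2) * c * u ^ 2 - f (s + u) with hφ
  set φ' : ℝ → ℝ := fun u => deriv f s + Real.exp 1 * c * u - deriv f (s + u) with hφ'
  set φ'' : ℝ → ℝ := fun u => Real.exp 1 * c - deriv (deriv f) (s + u) with hφ''
  have hshift : ∀ u : ℝ, HasDerivAt (fun v : ℝ => s + v) 1 u := fun u => by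
    simpa using (hasDerivAt_id u).const_add s
  have h1 : ∀ u, HasDerivAt φ (φ' u) u := by
    intro u
    have hf1 : HasDerivAt (fun v => f (s + v)) (deriv f (s + u)) u := by
      simpa [Function.comp_def] using ((hd1 (s + u)).hasDerivAt).comp u (hshift u)
    have hpoly : HasDerivAt (fun v => f s + deriv f s * v + (Real.exp 1 / 2) * c * v ^ 2)
        (deriv f s + Real.exp 1 * c * u) u := by
      have := (((hasDerivAt_id u).const_mul (deriv f s)).const_add (f s)).add
        (((hasDerivAt_pow 2 u)).const_mul ((Real.exp 1 / 2) * c))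
      refine hda_conv this (by funext v; simp only [Pi.add_apply, id_eq]) (by ring)
    simpa [hφ, hφ', Pi.sub_def] using hpoly.sub hf1
  have h2 : ∀ u, HasDerivAt φ' (φ'' u) u := by
    intro u
    have hf2 : HasDerivAt (fun v => deriv f (s + v)) (deriv (deriv f) (s + u)) u := by
      simpa [Function.comp_def] using ((hd2 (s + u)).hasDerivAt).comp u (hshift u)
    have hpoly : HasDerivAt (fun v => deriv f s + Real.exp 1 * c * v) (Real.exp 1 * c) u := by
      simpa using ((hasDerivAt_id u).const_mul (Real.exp 1 * c)).const_add (deriv f s)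
    simpa [hφ', hφ'', Pi.sub_def] using hpoly.sub hf2
  have key := convex_like_nonneg (-|h|) |h| (neg_nonpos.mpr (abs_nonneg h)) (abs_nonneg h)
    φ φ' φ'' h1 h2 (by simp [hφ]) (by simp [hφ'])
    (fun u hu => by
      have habs : |u| ≤ |h| := abs_le.mpr ⟨hu.1, hu.2⟩
      have hMb : M * |u| ≤ 1 := le_trans (by nlinarith [abs_nonneg u, abs_nonneg h]) hh
      have := hgron s (s + u)
      simp only [add_sub_cancel_left] at this
      have hexp : Real.exp (M * |u|) ≤ Real.exp 1 := Real.exp_le_exp.mpr hMb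
      have : deriv (deriv f) (s + u) ≤ c * Real.exp 1 := by
        calc deriv (deriv f) (s + u) ≤ c * Real.exp (M * |u|) := this
        _ ≤ c * Real.exp 1 := by nlinarith [hg2nn s]
      simp only [hφ'']
      linarith [this])
    h (by constructor <;> [exact neg_abs_le h; exact le_abs_self h])
  simp only [hφ] at key
  linarith
lemma taylor_lower (M : ℝ) (hM : 0 < M) (f : ℝ → ℝ) (hf : ContDiff ℝ 3 f)
    (hqsc : ∀ s : ℝ, |deriv (deriv (deriv f)) s| ≤ M * deriv (deriv f) s) :
    ∀ s h : ℝ, f s + deriv f s * h +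
      deriv (deriv f) s * (Real.exp (-(M * |h|)) + M * |h| - 1) / M ^ 2 ≤ f (s + h) := by
  obtain ⟨hd1, hd2, hd3⟩ := diff_chain f hf
  have hg2nn := g2nn M hM f hqsc
  have hgron := gron_le M hM f hf hqsc
  have main : ∀ (s σ : ℝ), σ = 1 ∨ σ = -1 → ∀ r : ℝ, 0 ≤ r →
      f s + deriv f s * (σ * r) +
        deriv (deriv f) s * (Real.exp (-(M * r)) + M * r - 1) / M ^ 2 ≤ f (s + σ * r) := by
    intro s σ hσ r hr
    have hσ2 : σ * σ = 1 := by rcases hσ with h | h <;> simp [h]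
    set c := deriv (deriv f) s with hc
    set φ : ℝ → ℝ := fun u => f (s + σ * u) - f s - deriv f s * (σ * u) -
      c * (Real.exp (-(M * u)) + M * u - 1) / M ^ 2 with hφ
    set φ' : ℝ → ℝ := fun u => σ * deriv f (s + σ * u) - deriv f s * σ -
      c * (M - M * Real.exp (-(M * u))) / M ^ 2 with hφ'
    set φ'' : ℝ → ℝ := fun u => deriv (deriv f) (s + σ * u) - c * Real.exp (-(M * u)) with hφ''
    have hshift : ∀ u : ℝ, HasDerivAt (fun v : ℝ => s + σ * v) σ u := fun u => by
      simpa using ((hasDerivAt_id u).const_mul σ).const_add s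
    have hexpd : ∀ u : ℝ, HasDerivAt (fun v : ℝ => Real.exp (-(M * v)))
        (-M * Real.exp (-(M * u))) u := by
      intro u
      have hin : HasDerivAt (fun v : ℝ => -(M * v)) (-M) u := by
        simpa [Pi.neg_def] using ((hasDerivAt_id u).const_mul M).neg
      simpa [mul_comm, Function.comp_def] using (Real.hasDerivAt_exp (-(M * u))).comp u hin
    have h1 : ∀ u, HasDerivAt φ (φ' u) u := by
      intro u
      have hf1 : HasDerivAt (fun v => f (s + σ * v)) (deriv f (s + σ * u) * σ) u :=
        ((hd1 (s + σ * u)).hasDerivAt).comp u (hshift u)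
      have hlin : HasDerivAt (fun v : ℝ => f s + deriv f s * (σ * v)) (deriv f s * σ) u := by
        have h := ((hasDerivAt_id u).const_mul (deriv f s * σ)).const_add (f s)
        have heq : (fun v : ℝ => f s + deriv f s * (σ * v)) =
            fun v : ℝ => f s + deriv f s * σ * v := by ext v; ring
        rw [heq]
        simpa using h
      have hrem : HasDerivAt (fun v : ℝ => c * (Real.exp (-(M * v)) + M * v - 1) / M ^ 2)
          (c * (M - M * Real.exp (-(M * u))) / M ^ 2) u := by
        have hinner : HasDerivAt (fun v : ℝ => Real.exp (-(M * v)) + M * v - 1)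
            (-M * Real.exp (-(M * u)) + M) u := by
          simpa using ((hexpd u).add (((hasDerivAt_id u).const_mul M))).sub_const 1
        have := (hinner.const_mul c).div_const (M ^ 2)
        refine hda_conv this rfl (by ring)
      have := (hf1.sub hlin).sub hrem
      refine hda_conv this ?_ ?_
      · ext v; simp [hφ]; ring
      · simp [hφ']; ring
    have h2 : ∀ u, HasDerivAt φ' (φ'' u) u := by
      intro u
      have hf2 : HasDerivAt (fun v => σ * deriv f (s + σ * v))
          (σ * (deriv (deriv f) (s + σ * u) * σ)) u :=
        (by simpa [Function.comp_def] using ((hd2 (s + σ * u)).hasDerivAt).comp u (hshift u) :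
          HasDerivAt (fun v => deriv f (s + σ * v)) (deriv (deriv f) (s + σ * u) * σ) u).const_mul σ
      have hrem : HasDerivAt (fun v : ℝ => deriv f s * σ + c * (M - M * Real.exp (-(M * v))) / M ^ 2)
          (c * Real.exp (-(M * u))) u := by
        have hinner : HasDerivAt (fun v : ℝ => M - M * Real.exp (-(M * v)))
            (-(M * (-M * Real.exp (-(M * u))))) u := by
          simpa using ((hexpd u).const_mul M).const_sub M
        have := ((hinner.const_mul c).div_const (M ^ 2)).const_add (deriv f s * σ)
        refine hda_conv this rfl ?_
        field_simp
      have := hf2.sub hrem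
      refine hda_conv this ?_ ?_
      · ext v; simp [hφ']; ring
      · simp only [hφ'']
        linear_combination (-(deriv (deriv f) (s + σ * u))) * hσ2
    have key := convex_like_nonneg 0 r le_rfl hr φ φ' φ'' h1 h2
      (by simp [hφ]) (by simp [hφ']; ring)
      (fun u hu => by
        have hu0 : 0 ≤ u := hu.1
        have hg := hgron (s + σ * u) s
        have habs : |s - (s + σ * u)| = u := by
          rcases hσ with h | h <;> simp [h, abs_of_nonneg hu0, abs_of_nonpos, hu0] <;>
            rw [abs_of_nonneg hu0]
        rw [habs] at hg
        have hexp1 : Real.exp (M * u) * Real.exp (-(M * u)) = 1 := by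
          rw [← Real.exp_add]; simp
        have hmul := mul_le_mul_of_nonneg_right hg (Real.exp_pos (-(M * u))).le
        rw [mul_assoc, hexp1, mul_one] at hmul
        simp only [hφ'']
        linarith)
      r ⟨hr, le_rfl⟩
    simp only [hφ] at key
    linarith
  intro s h
  rcases le_total 0 h with h0 | h0
  · have := main s 1 (Or.inl rfl) h h0
    simpa [abs_of_nonneg h0] using this
  · have := main s (-1) (Or.inr rfl) (-h) (by linarith)
    rw [abs_of_nonpos h0]
    simpa using this
lemma exp_neg_le_quad : ∀ τ : ℝ, 0 ≤ τ → Real.exp (-τ) ≤ 1 - τ + τ ^ 2 / 2 := by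
  intro τ hτ
  have hexpd : ∀ u : ℝ, HasDerivAt (fun v : ℝ => Real.exp (-v)) (-Real.exp (-u)) u := by
    intro u
    simpa [Function.comp_def] using (Real.hasDerivAt_exp (-u)).comp u (hasDerivAt_id u).neg
  have key := convex_like_nonneg 0 τ le_rfl hτ
    (fun u => 1 - u + u ^ 2 / 2 - Real.exp (-u))
    (fun u => -1 + u + Real.exp (-u))
    (fun u => 1 - Real.exp (-u))
    (fun u => by
      have := (((hasDerivAt_id u).const_sub 1).add ((hasDerivAt_pow 2 u).div_const 2)).sub
        (hexpd u)
      refine hda_conv this ?_ ?_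
      all_goals try funext v
      all_goals try simp only [id_eq, Pi.add_apply, Pi.sub_apply, Pi.neg_apply]
      all_goals ring)
    (fun u => by
      have := (((hasDerivAt_id u).const_add (-1))).add (hexpd u)
      refine hda_conv this ?_ ?_
      all_goals try funext v
      all_goals try simp only [id_eq, Pi.add_apply, Pi.sub_apply, Pi.neg_apply]
      all_goals ring)
    (by norm_num) (by norm_num)
    (fun u hu => by
      show 0 ≤ 1 - Real.exp (-u)
      have : Real.exp (-u) ≤ 1 := by
        rw [show (1:ℝ) = Real.exp 0 by simp]
        exact Real.exp_le_exp.mpr (by linarith [hu.1])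
      linarith)
    τ ⟨hτ, le_rfl⟩
  linarith

lemma psi_ge_cubic : ∀ τ : ℝ, 0 ≤ τ → τ ^ 2 / 2 - τ ^ 3 / 6 ≤ Real.exp (-τ) + τ - 1 := by
  intro τ hτ
  have hexpd : ∀ u : ℝ, HasDerivAt (fun v : ℝ => Real.exp (-v)) (-Real.exp (-u)) u := by
    intro u
    simpa [Function.comp_def] using (Real.hasDerivAt_exp (-u)).comp u (hasDerivAt_id u).neg
  have key := convex_like_nonneg 0 τ le_rfl hτ
    (fun u => Real.exp (-u) + u - 1 - u ^ 2 / 2 + u ^ 3 / 6)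
    (fun u => -Real.exp (-u) + 1 - u + u ^ 2 / 2)
    (fun u => Real.exp (-u) - 1 + u)
    (fun u => by
      have := ((((hexpd u).add (hasDerivAt_id u)).sub_const 1).sub
        ((hasDerivAt_pow 2 u).div_const 2)).add ((hasDerivAt_pow 3 u).div_const 6)
      refine hda_conv this ?_ ?_
      all_goals try funext v
      all_goals try simp only [id_eq, Pi.add_apply, Pi.sub_apply, Pi.neg_apply]
      all_goals ring)
    (fun u => by
      have := (((hexpd u).neg.add_const 1).sub (hasDerivAt_id u)).add
        ((hasDerivAt_pow 2 u).div_const 2)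
      refine hda_conv this ?_ ?_
      all_goals try funext v
      all_goals try simp only [id_eq, Pi.add_apply, Pi.sub_apply, Pi.neg_apply]
      all_goals ring)
    (by norm_num) (by norm_num)
    (fun u hu => by
      show 0 ≤ Real.exp (-u) - 1 + u
      have h1 : -u + 1 ≤ Real.exp (-u) := Real.add_one_le_exp (-u)
      linarith)
    τ ⟨hτ, le_rfl⟩
  linarith

lemma psi_ge_lin : ∀ τ : ℝ, 1 ≤ τ → τ / (4 * Real.exp 1) ≤ Real.exp (-τ) + τ - 1 := by
  intro τ hτ
  have he2 : (2 : ℝ) ≤ Real.exp 1 := by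
    have := Real.add_one_le_exp (1 : ℝ)
    linarith
  have hepos := Real.exp_pos (1 : ℝ)
  set g : ℝ → ℝ := fun v => Real.exp (-v) + v - 1 - v / (4 * Real.exp 1) with hg
  have hgd : ∀ u : ℝ, HasDerivAt g (-Real.exp (-u) + 1 - 1 / (4 * Real.exp 1)) u := by
    intro u
    have hexpd : HasDerivAt (fun v : ℝ => Real.exp (-v)) (-Real.exp (-u)) u := by
      simpa [Function.comp_def] using (Real.hasDerivAt_exp (-u)).comp u (hasDerivAt_id u).neg
    have := ((hexpd.add (hasDerivAt_id u)).sub_const 1).sub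
      ((hasDerivAt_id u).div_const (4 * Real.exp 1))
    refine hda_conv this ?_ ?_
    all_goals try funext v
    all_goals try simp only [id_eq, Pi.add_apply, Pi.sub_apply, Pi.neg_apply]
    all_goals ring
  have hmono : MonotoneOn g (Set.Icc 1 τ) := by
    apply monotoneOn_of_deriv_nonneg (convex_Icc 1 τ)
      (fun u _ => ((hgd u).continuousAt).continuousWithinAt)
      (fun u _ => ((hgd u).differentiableAt).differentiableWithinAt)
    intro u hu
    rw [(hgd u).deriv]
    have hu1 : (1:ℝ) ≤ u := (interior_subset hu : u ∈ Set.Icc 1 τ).1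
    have h1 : Real.exp (-u) ≤ Real.exp (-1) := Real.exp_le_exp.mpr (by linarith)
    have h2 : Real.exp (-1) = (Real.exp 1)⁻¹ := Real.exp_neg 1
    have h3 : (Real.exp 1)⁻¹ ≤ 1/2 := by
      rw [inv_le_iff_one_le_mul₀ (by positivity)] at *
      nlinarith
    have h4 : 1 / (4 * Real.exp 1) ≤ 1/8 := by
      rw [div_le_div_iff₀ (by positivity) (by norm_num)]
      nlinarith
    nlinarith
  have hg1 : 0 ≤ g 1 := by
    simp only [hg]
    rw [Real.exp_neg 1]
    have : (Real.exp 1)⁻¹ ≥ 1 / (4 * Real.exp 1) := by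
      rw [ge_iff_le, div_le_iff₀ (by positivity)]
      rw [inv_mul_eq_div, le_div_iff₀ hepos]
      nlinarith
    linarith
  have := hmono (Set.left_mem_Icc.mpr hτ) ⟨hτ, le_rfl⟩ hτ
  have hgτ : 0 ≤ g τ := le_trans hg1 this
  simp only [hg] at hgτ
  linarith

lemma psi_ge (a τ : ℝ) (ha : 1 ≤ a) (h0 : 0 ≤ τ) (hτa : τ ≤ a) :
    τ ^ 2 / (4 * Real.exp 1 * a) ≤ Real.exp (-τ) + τ - 1 := by
  have he2 : (2 : ℝ) ≤ Real.exp 1 := by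
    have := Real.add_one_le_exp (1 : ℝ); linarith
  have hapos : (0:ℝ) < a := by linarith
  rcases le_total τ 1 with h1 | h1
  · have h3 := psi_ge_cubic τ h0
    have hcube : τ ^ 3 ≤ τ ^ 2 := by nlinarith
    have : τ ^ 2 / 3 ≤ Real.exp (-τ) + τ - 1 := by nlinarith
    have hfrac : τ ^ 2 / (4 * Real.exp 1 * a) ≤ τ ^ 2 / 3 := by
      apply div_le_div_of_nonneg_left (by positivity) (by norm_num)
      nlinarith
    linarith
  · have h4 := psi_ge_lin τ h1
    have : τ ^ 2 / (4 * Real.exp 1 * a) ≤ τ / (4 * Real.exp 1) := by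
      rw [div_le_div_iff₀ (by positivity) (by positivity)]
      nlinarith [mul_le_mul_of_nonneg_left hτa h0, Real.exp_pos 1]
    linarith
section feas_arith
variable {γ c R si vi : ℝ}

lemma zfeas1 (hcpos : 0 < c) (hγpos : 0 < γ) (hγ1 : γ ≤ 1) (hγ2R : γ * (2 * R) = c)
    (hsl : -R ≤ si) (hvl : -R ≤ vi) (hvu : vi ≤ R) (h1 : si < -R + c) :
    |γ * (si - vi) - (-c + R + si)| ≤ c := by
  rw [abs_le]
  constructor
  · nlinarith [mul_le_mul_of_nonneg_right (le_of_lt h1) (by linarith : (0:ℝ) ≤ 1 - γ),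
      mul_le_mul_of_nonneg_left (by linarith : si - R ≤ si - vi) hγpos.le,
      mul_nonneg hγpos.le hcpos.le]
  · nlinarith [mul_le_mul_of_nonneg_left (by linarith : si - vi ≤ si + R) hγpos.le,
      mul_le_of_le_one_left (by linarith : (0:ℝ) ≤ si + R) hγ1]

lemma zfeas2 (hcpos : 0 < c) (hγpos : 0 < γ) (hγ1 : γ ≤ 1) (hγ2R : γ * (2 * R) = c)
    (hsu : si ≤ R) (hvl : -R ≤ vi) (hvu : vi ≤ R) (h2 : R < si + c) :
    |γ * (si - vi) - (-R + si + c)| ≤ c := by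
  rw [abs_le]
  constructor
  · nlinarith [mul_le_mul_of_nonneg_left (by linarith : si - R ≤ si - vi) hγpos.le,
      mul_le_mul_of_nonneg_right (by linarith : si - R ≤ 0) (by linarith : (0:ℝ) ≤ 1 - γ)]
  · nlinarith [mul_le_mul_of_nonneg_left (by linarith : si - vi ≤ si + R) hγpos.le,
      mul_le_mul_of_nonneg_right (le_of_lt h2) (by linarith : (0:ℝ) ≤ 1 - γ),
      mul_nonneg hγpos.le hcpos.le]

lemma zfeas3 (hcpos : 0 < c) (hγpos : 0 < γ) (hγ2R : γ * (2 * R) = c)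
    (hsl : -R ≤ si) (hsu : si ≤ R) (hvl : -R ≤ vi) (hvu : vi ≤ R) :
    |γ * (si - vi) - 0| ≤ c := by
  rw [sub_zero, abs_le]
  constructor
  · nlinarith [mul_le_mul_of_nonneg_left (by linarith : -(2*R) ≤ si - vi) hγpos.le]
  · nlinarith [mul_le_mul_of_nonneg_left (by linarith : si - vi ≤ 2*R) hγpos.le]

end feas_arith

lemma perlow_arith (e1 γ M R fs fv g1 g2 D E : ℝ)
    (he1pos : 0 < e1) (hM : 0 < M) (hRpos : 0 < R) (hγ : γ = 1 / (4 * M * R))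
    (hg2 : 0 ≤ g2)
    (htl : fs + g1 * D + g2 * E / M ^ 2 ≤ fv)
    (hE2 : D ^ 2 / (8 * e1 * M * R) ≤ E / M ^ 2) :
    γ * (fs - fv) ≤ g1 * (γ * -D) - (2 * e1)⁻¹ * (g2 * (γ * -D) ^ 2) := by
  have hγpos : 0 < γ := by rw [hγ]; positivity
  have h9 := mul_le_mul_of_nonneg_left hE2 hg2
  have h10 := mul_le_mul_of_nonneg_left htl hγpos.le
  have h11 := mul_le_mul_of_nonneg_left h9 hγpos.le
  have heq : γ * (g2 * (D ^ 2 / (8 * e1 * M * R))) = (2 * e1)⁻¹ * (g2 * (γ * -D) ^ 2) := by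
    rw [hγ]; ring
  have heq2 : γ * (g2 * (E / M ^ 2)) = γ * (g2 * E / M ^ 2) := by ring
  have h12 : (2 * e1)⁻¹ * (g2 * (γ * -D) ^ 2) ≤ γ * (g2 * E / M ^ 2) := by
    rw [← heq, ← heq2]; exact h11
  linarith [h10, h12]

set_option maxHeartbeats 1600000
open Set

/-- Lemma 4.2 (Iterative Refinement): geometric decrease of the optimality gap
when iterating with κ-approximate solutions of the residual problem. -/
theorem iterative_refinement
    (d n m : ℕ) (A : Matrix (Fin d) (Fin n) ℝ) (b : Fin d → ℝ)
    (P : Matrix (Fin m) (Fin n) ℝ) (M R κ : ℝ)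
    (hM : 0 < M) (hR : 1 / (2 * M) ≤ R) (hκ : 1 ≤ κ)
    (f : ℝ → ℝ) (hconv : ConvexOn ℝ Set.univ f) (hf : ContDiff ℝ 3 f)
    (hqsc : ∀ s : ℝ, |deriv (deriv (deriv f)) s| ≤ M * deriv (deriv f) s)
    (xstar : Fin n → ℝ) (hxsA : A.mulVec xstar = b)
    (hxsR : ‖P.mulVec xstar‖ ≤ R)
    (hxsopt : ∀ x' : Fin n → ℝ, A.mulVec x' = b →
      (∑ i, f ((P.mulVec xstar) i)) ≤ ∑ i, f ((P.mulVec x') i))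
    (x : ℕ → Fin n → ℝ) (Δt : ℕ → Fin n → ℝ)
    (hx0A : A.mulVec (x 0) = b) (hx0R : ‖P.mulVec (x 0)‖ ≤ R)
    (hrec : ∀ t : ℕ, x (t + 1) = x t - Real.exp (-2) • Δt t)
    (hΔA : ∀ t : ℕ, A.mulVec (Δt t) = 0)
    (hΔbox : ∀ t : ℕ, ‖P.mulVec (Δt t) - zShift m n P M R (x t)‖ ≤ 1 / (2 * M))
    (hΔres : ∀ t : ℕ, resObj m n P f (x t) (Δt t) ≥
      (1 / κ) * sSup {v : ℝ | ∃ Δ : Fin n → ℝ, A.mulVec Δ = 0 ∧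
        ‖P.mulVec Δ - zShift m n P M R (x t)‖ ≤ 1 / (2 * M) ∧
        v = resObj m n P f (x t) Δ}) :
    ∀ T : ℕ, A.mulVec (x T) = b ∧ ‖P.mulVec (x T)‖ ≤ R ∧
      (∑ i, f ((P.mulVec (x T)) i)) - (∑ i, f ((P.mulVec xstar) i)) ≤
        (1 - Real.exp (-2) / (4 * κ * M * R)) ^ T *
          ((∑ i, f ((P.mulVec (x 0)) i)) - ∑ i, f ((P.mulVec xstar) i)) := by
  obtain ⟨hd1, hd2, hd3⟩ := diff_chain f hf
  have hg2nn := g2nn M hM f hqsc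
  set e1 := Real.exp 1 with he1
  set ee := Real.exp (-2) with hee
  have he1pos : 0 < e1 := Real.exp_pos 1
  have he12 : (2:ℝ) ≤ e1 := by have := Real.add_one_le_exp (1:ℝ); simp only [he1]; linarith
  have heepos : 0 < ee := Real.exp_pos _
  have hee1 : ee ≤ 1 := by
    rw [hee, show (1:ℝ) = Real.exp 0 by simp]
    exact Real.exp_le_exp.mpr (by norm_num)
  have hprod : e1 * (e1 * ee) = 1 := by
    rw [he1, hee, ← Real.exp_add, ← Real.exp_add]; norm_num
  have hcpos : 0 < 1 / (2 * M) := by positivity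
  have hRpos : 0 < R := lt_of_lt_of_le hcpos hR
  have h2MR : 1 ≤ 2 * M * R := by
    rw [div_le_iff₀ (by positivity)] at hR; linarith
  set γ : ℝ := 1 / (4 * M * R) with hγ
  have hγpos : 0 < γ := by positivity
  have hγ1 : γ ≤ 1 := by
    rw [hγ, div_le_one (by positivity)]; linarith
  have hγ2R : γ * (2 * R) = 1 / (2 * M) := by
    rw [hγ]; field_simp; norm_num
  have hκpos : 0 < κ := by linarith
  set ρ : ℝ := 1 - ee / (4 * κ * M * R) with hρ
  have hρ0 : 0 ≤ ρ := by
    rw [hρ, sub_nonneg, div_le_one (by positivity)]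
    nlinarith
  have hvR : ∀ i, |(P.mulVec xstar) i| ≤ R := fun i => by
    have := norm_le_pi_norm (P.mulVec xstar) i
    rw [Real.norm_eq_abs] at this; linarith
  intro T
  induction T with
  | zero => exact ⟨hx0A, hx0R, by simp⟩
  | succ t ih =>
    obtain ⟨hAt, hRt, hgapt⟩ := ih
    set s : Fin m → ℝ := P.mulVec (x t) with hs
    set v : Fin m → ℝ := P.mulVec xstar with hv
    set z : Fin m → ℝ := zShift m n P M R (x t) with hz
    set w : Fin m → ℝ := P.mulVec (Δt t) with hw
    have hsR : ∀ i, |s i| ≤ R := fun i => by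
      have := norm_le_pi_norm s i
      rw [Real.norm_eq_abs] at this; linarith [hRt]
    have hbox : ∀ i, |w i - z i| ≤ 1 / (2 * M) := fun i => by
      have h := hΔbox t
      have := norm_le_pi_norm (w - z) i
      rw [Real.norm_eq_abs] at this
      simp only [Pi.sub_apply] at this
      exact le_trans this h
    have hzb : ∀ i, |z i| ≤ 1 / (2 * M) := fun i => by
      have hsl := neg_le_of_abs_le (hsR i)
      have hsu := le_of_abs_le (hsR i)
      simp only [hz, zShift, ← hs]
      split_ifs with h1 h2
      · rw [abs_le]; constructor <;> nlinarith
      · rw [abs_le]; constructor <;> nlinarith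
      · simp only [abs_zero]; positivity
    have hwb : ∀ i, |w i| ≤ 1 / M := fun i => by
      have h1 := hbox i
      have h2 := hzb i
      have := abs_sub_abs_le_abs_sub (w i) (z i)
      have hM' : 1 / (2 * M) + 1 / (2 * M) = 1 / M := by
        rw [← add_div, div_eq_div_iff (by positivity : (0:ℝ) < 2*M).ne' hM.ne']
        ring
      linarith [abs_sub_abs_le_abs_sub (w i) (z i)]
    -- new point coordinates
    have hPnew : ∀ i, (P.mulVec (x (t + 1))) i = s i - ee * w i := fun i => by
      rw [hrec t, Matrix.mulVec_sub, Matrix.mulVec_smul]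
      simp [hs, hw, Pi.sub_apply, Pi.smul_apply, smul_eq_mul]
    -- A-invariant
    have hA' : A.mulVec (x (t + 1)) = b := by
      rw [hrec t, Matrix.mulVec_sub, Matrix.mulVec_smul, hΔA t, hAt]
      simp
    -- norm invariant
    have hR' : ‖P.mulVec (x (t + 1))‖ ≤ R := by
      rw [pi_norm_le_iff_of_nonneg hRpos.le]
      intro i
      rw [Real.norm_eq_abs, hPnew i]
      obtain ⟨hwlo, hwhi⟩ := abs_le.mp (hbox i)
      have hsl := neg_le_of_abs_le (hsR i)
      have hsu := le_of_abs_le (hsR i)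
      have hzi : z i = zShift m n P M R (x t) i := by rw [hz]
      rw [abs_le]
      simp only [hz, zShift, ← hs] at hwlo hwhi
      split_ifs at hwlo hwhi with h1 h2
      · constructor
        · nlinarith [mul_le_mul_of_nonneg_left hwhi heepos.le]
        · nlinarith [mul_le_mul_of_nonneg_left hwlo heepos.le,
            mul_le_mul_of_nonneg_right (le_of_lt h1) (sub_nonneg.mpr hee1)]
      · constructor
        · nlinarith [mul_le_mul_of_nonneg_left hwhi heepos.le,
            mul_le_mul_of_nonneg_right (le_of_lt h2) (sub_nonneg.mpr hee1)]
        · nlinarith [mul_le_mul_of_nonneg_left hwlo heepos.le]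
      · constructor
        · nlinarith [mul_le_mul_of_nonneg_left hwhi heepos.le]
        · nlinarith [mul_le_mul_of_nonneg_left hwlo heepos.le]
    refine ⟨hA', hR', ?_⟩
    -- unfolded form of the residual objective
    have hres_eq : ∀ Δ : Fin n → ℝ, resObj m n P f (x t) Δ =
        (∑ i, deriv f (s i) * (P.mulVec Δ) i) -
          (2 * e1)⁻¹ * ∑ i, deriv (deriv f) (s i) * (P.mulVec Δ) i ^ 2 := fun Δ => by
      simp only [resObj, ← hs, ← he1]
    -- Step 1 : progress of one iteration
    have hco0 : ((2:ℝ) * e1)⁻¹ = e1 / 2 * ee := by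
      rw [inv_eq_one_div, div_eq_iff (by positivity : (2:ℝ) * e1 ≠ 0)]
      linear_combination -hprod
    have hper : ∀ i : Fin m, f (s i - ee * w i) ≤
        f (s i) - ee * (deriv f (s i) * w i) +
          ee * ((2 * e1)⁻¹ * (deriv (deriv f) (s i) * w i ^ 2)) := by
      intro i
      have hcond : M * |(-(ee * w i))| ≤ 1 := by
        rw [abs_neg, abs_mul, abs_of_nonneg heepos.le]
        have hwi := hwb i
        have h1 : M * (ee * |w i|) ≤ M * (ee * (1 / M)) :=
          mul_le_mul_of_nonneg_left (mul_le_mul_of_nonneg_left hwi heepos.le) hM.le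
        have h2 : M * (ee * (1 / M)) = ee := by field_simp
        linarith
      have htu := taylor_upper M hM f hf hqsc (s i) (-(ee * w i)) hcond
      rw [show s i + -(ee * w i) = s i - ee * w i by ring] at htu
      have hco : (e1 / 2) * deriv (deriv f) (s i) * (-(ee * w i)) ^ 2 =
          ee * ((2 * e1)⁻¹ * (deriv (deriv f) (s i) * w i ^ 2)) := by
        rw [hco0]; ring
      nlinarith [htu, hco]
    have hdec : (∑ i, f ((P.mulVec (x (t + 1))) i)) ≤
        (∑ i, f (s i)) - ee * resObj m n P f (x t) (Δt t) := by
      calc (∑ i, f ((P.mulVec (x (t + 1))) i)) = ∑ i, f (s i - ee * w i) := by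
            exact Finset.sum_congr rfl fun i _ => by rw [hPnew i]
        _ ≤ ∑ i, (f (s i) - ee * (deriv f (s i) * w i) +
              ee * ((2 * e1)⁻¹ * (deriv (deriv f) (s i) * w i ^ 2))) :=
            Finset.sum_le_sum fun i _ => hper i
        _ = (∑ i, f (s i)) - ee * resObj m n P f (x t) (Δt t) := by
            rw [hres_eq (Δt t)]
            simp only [← hw]
            rw [Finset.sum_add_distrib, Finset.sum_sub_distrib, ← Finset.mul_sum,
              ← Finset.mul_sum, ← Finset.mul_sum]
            ring
    -- Step 2 : the scaled step towards the optimum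
    set Δs : Fin n → ℝ := γ • (x t - xstar) with hΔsd
    have hPΔs : ∀ i, (P.mulVec Δs) i = γ * (s i - v i) := fun i => by
      rw [hΔsd, Matrix.mulVec_smul, Matrix.mulVec_sub]
      simp [hs, hv, smul_eq_mul]
    have hAΔs : A.mulVec Δs = 0 := by
      rw [hΔsd, Matrix.mulVec_smul, Matrix.mulVec_sub, hAt, hxsA]
      simp
    have hfeas : ‖P.mulVec Δs - z‖ ≤ 1 / (2 * M) := by
      rw [pi_norm_le_iff_of_nonneg hcpos.le]
      intro i
      rw [Real.norm_eq_abs, Pi.sub_apply, hPΔs i]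
      have hsl := neg_le_of_abs_le (hsR i)
      have hsu := le_of_abs_le (hsR i)
      have hvl := neg_le_of_abs_le (hvR i)
      have hvu := le_of_abs_le (hvR i)
      simp only [hz, zShift, ← hs]
      split_ifs with h1 h2
      · exact zfeas1 hcpos hγpos hγ1 hγ2R hsl hvl hvu (by linarith)
      · exact zfeas2 hcpos hγpos hγ1 hγ2R hsu hvl hvu (by linarith)
      · exact zfeas3 hcpos hγpos hγ2R hsl hsu hvl hvu
    -- Step 3 : per-coordinate lower bound on the residual of Δs
    have hperlow : ∀ i : Fin m, γ * (f (s i) - f (v i)) ≤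
        deriv f (s i) * (γ * (s i - v i)) -
          (2 * e1)⁻¹ * (deriv (deriv f) (s i) * (γ * (s i - v i)) ^ 2) := by
      intro i
      have habsD : |v i - s i| ≤ 2 * R := by
        have h1 : |v i - s i| ≤ |v i| + |s i| := abs_sub _ _
        linarith [hvR i, hsR i]
      have htl := taylor_lower M hM f hf hqsc (s i) (v i - s i)
      rw [show s i + (v i - s i) = v i by ring] at htl
      have hτ : M * |v i - s i| ≤ 2 * M * R := by nlinarith [abs_nonneg (v i - s i)]
      have hEi := psi_ge (2 * M * R) (M * |v i - s i|) h2MR (by positivity) hτ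
      have hEi' : (M * |v i - s i|) ^ 2 ≤
          (Real.exp (-(M * |v i - s i|)) + M * |v i - s i| - 1) * (4 * e1 * (2 * M * R)) :=
        (div_le_iff₀ (by positivity)).1 hEi
      have hE2 : (v i - s i) ^ 2 / (8 * e1 * M * R) ≤
          (Real.exp (-(M * |v i - s i|)) + M * |v i - s i| - 1) / M ^ 2 := by
        rw [div_le_div_iff₀ (by positivity) (by positivity)]
        nlinarith [sq_abs (v i - s i), hEi']
      have key := perlow_arith e1 γ M R (f (s i)) (f (v i)) (deriv f (s i))
        (deriv (deriv f) (s i)) (v i - s i)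
        (Real.exp (-(M * |v i - s i|)) + M * |v i - s i| - 1)
        he1pos hM hRpos hγ (hg2nn (s i)) htl hE2
      have hD : γ * -(v i - s i) = γ * (s i - v i) := by ring
      rw [hD] at key
      exact key
    have hresΔs : γ * ((∑ i, f (s i)) - (∑ i, f (v i))) ≤ resObj m n P f (x t) Δs := by
      rw [hres_eq Δs]
      have e1' : (∑ i, deriv f (s i) * (P.mulVec Δs) i) =
          ∑ i, deriv f (s i) * (γ * (s i - v i)) :=
        Finset.sum_congr rfl fun i _ => by rw [hPΔs i]
      have e2' : (∑ i, deriv (deriv f) (s i) * (P.mulVec Δs) i ^ 2) =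
          ∑ i, deriv (deriv f) (s i) * (γ * (s i - v i)) ^ 2 :=
        Finset.sum_congr rfl fun i _ => by rw [hPΔs i]
      rw [e1', e2']
      calc γ * ((∑ i, f (s i)) - (∑ i, f (v i)))
          = ∑ i, γ * (f (s i) - f (v i)) := by
            rw [← Finset.sum_sub_distrib, Finset.mul_sum]
        _ ≤ ∑ i, (deriv f (s i) * (γ * (s i - v i)) -
              (2 * e1)⁻¹ * (deriv (deriv f) (s i) * (γ * (s i - v i)) ^ 2)) :=
            Finset.sum_le_sum fun i _ => hperlow i
        _ = (∑ i, deriv f (s i) * (γ * (s i - v i))) -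
              (2 * e1)⁻¹ * ∑ i, deriv (deriv f) (s i) * (γ * (s i - v i)) ^ 2 := by
            rw [Finset.sum_sub_distrib, Finset.mul_sum]
    -- Step 4 : the sup is at least the residual of Δs
    have h5 := hΔres t
    rw [← hz] at h5
    have hBdd : BddAbove {v_1 : ℝ | ∃ Δ, A.mulVec Δ = 0 ∧
        ‖P.mulVec Δ - z‖ ≤ 1 / (2 * M) ∧ v_1 = resObj m n P f (x t) Δ} := by
      refine ⟨∑ i, |deriv f (s i)| * (1 / M), ?_⟩
      rintro val ⟨Δ, -, hn, rfl⟩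
      rw [hres_eq Δ]
      have hwb' : ∀ i, |(P.mulVec Δ) i| ≤ 1 / M := fun i => by
        have h1 : |(P.mulVec Δ) i - z i| ≤ 1 / (2 * M) := by
          have := norm_le_pi_norm (P.mulVec Δ - z) i
          rw [Real.norm_eq_abs] at this
          simp only [Pi.sub_apply] at this
          exact le_trans this hn
        have h2 := hzb i
        have hM' : 1 / (2 * M) + 1 / (2 * M) = 1 / M := by
          rw [← add_div, div_eq_div_iff (by positivity : (0:ℝ) < 2 * M).ne' hM.ne']
          ring
        have h3 : |(P.mulVec Δ) i| ≤ |(P.mulVec Δ) i - z i| + |z i| := by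
          have := abs_sub_abs_le_abs_sub ((P.mulVec Δ) i) (z i)
          linarith [abs_nonneg (z i)]
        linarith
      have hb1 : (∑ i, deriv f (s i) * (P.mulVec Δ) i) ≤ ∑ i, |deriv f (s i)| * (1 / M) :=
        Finset.sum_le_sum fun i _ => by
          calc deriv f (s i) * (P.mulVec Δ) i ≤ |deriv f (s i) * (P.mulVec Δ) i| :=
                le_abs_self _
            _ = |deriv f (s i)| * |(P.mulVec Δ) i| := abs_mul _ _
            _ ≤ |deriv f (s i)| * (1 / M) :=
                mul_le_mul_of_nonneg_left (hwb' i) (abs_nonneg _)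
      have hb2 : 0 ≤ (2 * e1)⁻¹ * ∑ i, deriv (deriv f) (s i) * (P.mulVec Δ) i ^ 2 :=
        mul_nonneg (by positivity)
          (Finset.sum_nonneg fun i _ => mul_nonneg (hg2nn _) (sq_nonneg _))
      linarith
    have hmem : resObj m n P f (x t) Δs ∈ {v_1 : ℝ | ∃ Δ, A.mulVec Δ = 0 ∧
        ‖P.mulVec Δ - z‖ ≤ 1 / (2 * M) ∧ v_1 = resObj m n P f (x t) Δ} :=
      ⟨Δs, hAΔs, hfeas, rfl⟩
    have hsupge := le_csSup hBdd hmem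
    -- Step 5 : assemble
    have hgap0 : 0 ≤ (∑ i, f (s i)) - (∑ i, f (v i)) := by
      have h := hxsopt (x t) hAt
      simp only [← hs, ← hv] at h
      linarith
    have h6 : 1 / κ * (γ * ((∑ i, f (s i)) - (∑ i, f (v i)))) ≤
        resObj m n P f (x t) (Δt t) := by
      refine le_trans ?_ h5
      exact mul_le_mul_of_nonneg_left (le_trans hresΔs hsupge) (by positivity)
    have hue : ee * (1 / κ * (γ * ((∑ i, f (s i)) - (∑ i, f (v i))))) =
        ee / (4 * κ * M * R) * ((∑ i, f (s i)) - (∑ i, f (v i))) := by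
      rw [hγ]
      rw [div_eq_mul_inv, div_eq_mul_inv, div_eq_mul_inv]
      rw [mul_inv, mul_inv, mul_inv]
      ring
    calc (∑ i, f ((P.mulVec (x (t + 1))) i)) - (∑ i, f (v i))
        ≤ ((∑ i, f (s i)) - ee * resObj m n P f (x t) (Δt t)) - (∑ i, f (v i)) := by
          linarith [hdec]
      _ ≤ ρ * ((∑ i, f (s i)) - (∑ i, f (v i))) := by
          have h7 := mul_le_mul_of_nonneg_left h6 heepos.le
          rw [hue] at h7
          rw [hρ]
          linarith [h7]
      _ ≤ ρ * (ρ ^ t * ((∑ i, f ((P.mulVec (x 0)) i)) - ∑ i, f (v i))) :=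
          mul_le_mul_of_nonneg_left hgapt hρ0
      _ = ρ ^ (t + 1) * ((∑ i, f ((P.mulVec (x 0)) i)) - ∑ i, f (v i)) := by ring
end

section
/- Let P be a real m×n matrix of rank n, A a real d×n matrix of rank d, c ∈ ℝ^d, and let r, r' ∈ ℝ^m have strictly positive entries with r'_i ≥ r_i for all i. Let Δ̃ attain the minimum of ∑_{i=1}^m r_i (Px)_i² over {x : Ax = c}, and write Ψ(s) = min{ ∑_i s_i (Px)_i² : Ax = c }. Then Ψ(r') ≥ Ψ(r) + ∑_{i=1}^m (1 − r_i/r'_i)·r_i·(PΔ̃)_i². -/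
/-!
The minimiser `Δ̃` of the `r`-energy is characterised by first-order optimality: moving along
the feasible line from `Δ̃` to any feasible `x` cannot decrease the energy, so
`∑ rᵢ zᵢ (yᵢ - zᵢ) = 0` with `z = PΔ̃`, `y = Px`. Completing the square,
`r'ᵢ yᵢ² = rᵢ zᵢ² + 2 rᵢ zᵢ (yᵢ - zᵢ) + (1 - rᵢ/r'ᵢ) rᵢ zᵢ² + (r'ᵢ yᵢ - rᵢ zᵢ)² / r'ᵢ`,
and summing over `i` gives the bound for every feasible `x`, hence for `Ψ(r')`.
-/

open Matrix

lemma eq_zero_of_forall_sq_add_mul_nonneg {a b : ℝ} (h : ∀ t : ℝ, 0 ≤ a * t ^ 2 + 2 * b * t) :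
    b = 0 := by
  have hdisc : discrim a (2 * b) 0 ≤ 0 :=
    discrim_le_zero fun t => by simpa only [sq, add_zero] using h t
  rw [discrim] at hdisc
  nlinarith [sq_nonneg b]

lemma sum_mul_sq_add_smul {ι : Type*} [Fintype ι] (r z w : ι → ℝ) (t : ℝ) :
    ∑ i, r i * (z + t • w) i ^ 2 =
      (∑ i, r i * w i ^ 2) * t ^ 2 + 2 * (∑ i, r i * (z i * w i)) * t + ∑ i, r i * z i ^ 2 := by
  simp only [Finset.sum_mul, Finset.mul_sum, ← Finset.sum_add_distrib]
  exact Finset.sum_congr rfl fun i _ => by simp only [Pi.add_apply, Pi.smul_apply, smul_eq_mul]; ring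

lemma sum_mul_mul_sub_eq_zero_of_le_line {ι : Type*} [Fintype ι] (r z y : ι → ℝ)
    (h : ∀ t : ℝ, ∑ i, r i * z i ^ 2 ≤ ∑ i, r i * (z + t • (y - z)) i ^ 2) :
    ∑ i, r i * (z i * (y - z) i) = 0 :=
  eq_zero_of_forall_sq_add_mul_nonneg (a := ∑ i, r i * (y - z) i ^ 2) fun t => by
    have := h t
    rw [sum_mul_sq_add_smul] at this
    linarith

lemma sum_mul_mulVec_sub_eq_zero_of_isMinOn {m n d : ℕ} (P : Matrix (Fin m) (Fin n) ℝ)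
    (A : Matrix (Fin d) (Fin n) ℝ) (c : Fin d → ℝ) (r : Fin m → ℝ) {x₀ x : Fin n → ℝ}
    (hx₀ : A *ᵥ x₀ = c) (hx : A *ᵥ x = c)
    (hmin : ∀ x : Fin n → ℝ, A *ᵥ x = c →
      ∑ i, r i * (P *ᵥ x₀) i ^ 2 ≤ ∑ i, r i * (P *ᵥ x) i ^ 2) :
    ∑ i, r i * ((P *ᵥ x₀) i * (P *ᵥ x - P *ᵥ x₀) i) = 0 := by
  refine sum_mul_mul_sub_eq_zero_of_le_line r _ _ fun t => ?_
  have hline : A *ᵥ (x₀ + t • (x - x₀)) = c := by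
    simp [mulVec_add, mulVec_smul, mulVec_sub, hx₀, hx]
  simpa only [mulVec_add, mulVec_smul, mulVec_sub] using hmin _ hline

lemma mul_sq_add_le_mul_sq {a b y z : ℝ} (hb : 0 < b) :
    a * z ^ 2 + 2 * (a * (z * (y - z))) + (1 - a / b) * (a * z ^ 2) ≤ b * y ^ 2 := by
  have hsq : b * y ^ 2 - (a * z ^ 2 + 2 * (a * (z * (y - z))) + (1 - a / b) * (a * z ^ 2)) =
      (b * y - a * z) ^ 2 / b := by
    field_simp
    ring
  linarith [div_nonneg (sq_nonneg (b * y - a * z)) hb.le]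

lemma sum_mul_sq_add_le_of_orthogonal {ι : Type*} [Fintype ι] {r r' y z : ι → ℝ}
    (hr' : ∀ i, 0 < r' i) (horth : ∑ i, r i * (z i * (y - z) i) = 0) :
    ∑ i, r i * z i ^ 2 + ∑ i, (1 - r i / r' i) * (r i * z i ^ 2) ≤ ∑ i, r' i * y i ^ 2 := by
  have hsum := Finset.sum_le_sum fun i (_ : i ∈ Finset.univ) => mul_sq_add_le_mul_sq
    (a := r i) (y := y i) (z := z i) (hr' i)
  simp only [Finset.sum_add_distrib, ← Finset.mul_sum, Pi.sub_apply] at hsum horth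
  linarith

theorem energy_increase_general
    (m n d : ℕ) (P : Matrix (Fin m) (Fin n) ℝ) (A : Matrix (Fin d) (Fin n) ℝ)
    (c : Fin d → ℝ)
    (r r' : Fin m → ℝ) (hr' : ∀ i, 0 < r' i)
    (Δt : Fin n → ℝ) (hΔA : A.mulVec Δt = c)
    (hΔmin : ∀ x : Fin n → ℝ, A.mulVec x = c →
      (∑ i, r i * (P.mulVec Δt) i ^ 2) ≤ ∑ i, r i * (P.mulVec x) i ^ 2) :
    sInf {v : ℝ | ∃ x : Fin n → ℝ, A.mulVec x = c ∧
        v = ∑ i, r' i * (P.mulVec x) i ^ 2} ≥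
      sInf {v : ℝ | ∃ x : Fin n → ℝ, A.mulVec x = c ∧
        v = ∑ i, r i * (P.mulVec x) i ^ 2} +
      ∑ i, (1 - r i / r' i) * (r i * (P.mulVec Δt) i ^ 2) := by
  have hΨr : IsLeast {v : ℝ | ∃ x : Fin n → ℝ, A *ᵥ x = c ∧ v = ∑ i, r i * (P *ᵥ x) i ^ 2}
      (∑ i, r i * (P *ᵥ Δt) i ^ 2) :=
    ⟨⟨Δt, hΔA, rfl⟩, by rintro v ⟨x, hx, rfl⟩; exact hΔmin x hx⟩
  rw [hΨr.csInf_eq, ge_iff_le]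
  refine le_csInf ⟨_, Δt, hΔA, rfl⟩ ?_
  rintro v ⟨x, hx, rfl⟩
  exact sum_mul_sq_add_le_of_orthogonal hr'
    (sum_mul_mulVec_sub_eq_zero_of_isMinOn P A c r hΔA hx hΔmin)

/-- Lemma D.2 (energy increase): if r' ≥ r, then
Ψ(r') ≥ Ψ(r) + ∑ᵢ (1 − rᵢ/r'ᵢ)·rᵢ·(PΔ̃)ᵢ². -/
theorem energy_increase
    (m n d : ℕ) (P : Matrix (Fin m) (Fin n) ℝ) (A : Matrix (Fin d) (Fin n) ℝ)
    (c : Fin d → ℝ) (hP : P.rank = n) (hA : A.rank = d)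
    (r r' : Fin m → ℝ) (hr : ∀ i, 0 < r i) (hr' : ∀ i, 0 < r' i)
    (hle : ∀ i, r i ≤ r' i)
    (Δt : Fin n → ℝ) (hΔA : A.mulVec Δt = c)
    (hΔmin : ∀ x : Fin n → ℝ, A.mulVec x = c →
      (∑ i, r i * (P.mulVec Δt) i ^ 2) ≤ ∑ i, r i * (P.mulVec x) i ^ 2) :
    sInf {v : ℝ | ∃ x : Fin n → ℝ, A.mulVec x = c ∧
        v = ∑ i, r' i * (P.mulVec x) i ^ 2} ≥
      sInf {v : ℝ | ∃ x : Fin n → ℝ, A.mulVec x = c ∧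
        v = ∑ i, r i * (P.mulVec x) i ^ 2} +
      ∑ i, (1 - r i / r' i) * (r i * (P.mulVec Δt) i ^ 2) :=
  energy_increase_general m n d P A c r r' hr' Δt hΔA hΔmin
end

section
/- Let P be a real m×n matrix of rank n, A a real d×n matrix of rank d, c ∈ ℝ^d, and let r, r' ∈ ℝ^m have strictly positive entries with r'_i ≤ r_i for all i. Let Δ̃ attain the minimum of ∑_{i=1}^m r_i (Px)_i² over {x : Ax = c}, and write Ψ(s) = min{ ∑_i s_i (Px)_i² : Ax = c }. Then Ψ(r') ≤ Ψ(r) − (1/2)·∑_{i=1}^m (1 − r'_i/r_i)·r_i·(PΔ̃)_i². -/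
/-!
The old minimizer `Δt` stays feasible, so `Ψ(r')` is at most its `r'`-energy. That energy is
`Ψ(r) - ∑ᵢ (1 - r'ᵢ/rᵢ)·rᵢ·(PΔt)ᵢ²`, and the subtracted sum is nonnegative because `r' ≤ r`.
-/

open scoped BigOperators

section ValueSet

variable {α : Type*} {p : α → Prop} {f : α → ℝ}

theorem sInf_values_eq_of_forall_le {x₀ : α} (hx₀ : p x₀) (hmin : ∀ x, p x → f x₀ ≤ f x) :
    sInf {v : ℝ | ∃ x, p x ∧ v = f x} = f x₀ := by
  apply le_antisymm
  · refine csInf_le ⟨f x₀, ?_⟩ ⟨x₀, hx₀, rfl⟩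
    rintro v ⟨x, hx, rfl⟩
    exact hmin x hx
  · refine le_csInf ⟨f x₀, x₀, hx₀, rfl⟩ ?_
    rintro v ⟨x, hx, rfl⟩
    exact hmin x hx

theorem sInf_values_le_of_nonneg (hf : ∀ x, 0 ≤ f x) {x₀ : α} (hx₀ : p x₀) :
    sInf {v : ℝ | ∃ x, p x ∧ v = f x} ≤ f x₀ := by
  refine csInf_le ⟨0, ?_⟩ ⟨x₀, hx₀, rfl⟩
  rintro v ⟨x, -, rfl⟩
  exact hf x

end ValueSet

section WeightedSquares

variable {ι : Type*} [Fintype ι] {r r' : ι → ℝ}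

theorem sum_weighted_sq_eq_sub (hr : ∀ i, r i ≠ 0) (y : ι → ℝ) :
    ∑ i, r' i * y i ^ 2 =
      ∑ i, r i * y i ^ 2 - ∑ i, (1 - r' i / r i) * (r i * y i ^ 2) := by
  rw [← Finset.sum_sub_distrib]
  refine Finset.sum_congr rfl fun i _ => ?_
  field_simp [hr i]
  ring

theorem sum_weighted_sq_nonneg (hr : ∀ i, 0 ≤ r i) (y : ι → ℝ) :
    0 ≤ ∑ i, r i * y i ^ 2 :=
  Finset.sum_nonneg fun i _ => mul_nonneg (hr i) (sq_nonneg _)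

theorem sum_weight_decrement_nonneg (hr : ∀ i, 0 < r i) (hle : ∀ i, r' i ≤ r i) (y : ι → ℝ) :
    0 ≤ ∑ i, (1 - r' i / r i) * (r i * y i ^ 2) :=
  Finset.sum_nonneg fun i _ =>
    mul_nonneg (sub_nonneg.2 (div_le_one_of_le₀ (hle i) (hr i).le))
      (mul_nonneg (hr i).le (sq_nonneg _))

end WeightedSquares

theorem energy_decrease_general
    (m n d : ℕ) (P : Matrix (Fin m) (Fin n) ℝ) (A : Matrix (Fin d) (Fin n) ℝ)
    (c : Fin d → ℝ)
    (r r' : Fin m → ℝ) (hr' : ∀ i, 0 < r' i)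
    (hle : ∀ i, r' i ≤ r i)
    (Δt : Fin n → ℝ) (hΔA : A.mulVec Δt = c)
    (hΔmin : ∀ x : Fin n → ℝ, A.mulVec x = c →
      (∑ i, r i * (P.mulVec Δt) i ^ 2) ≤ ∑ i, r i * (P.mulVec x) i ^ 2) :
    sInf {v : ℝ | ∃ x : Fin n → ℝ, A.mulVec x = c ∧
        v = ∑ i, r' i * (P.mulVec x) i ^ 2} ≤
      sInf {v : ℝ | ∃ x : Fin n → ℝ, A.mulVec x = c ∧
        v = ∑ i, r i * (P.mulVec x) i ^ 2} -
      (1 / 2) * ∑ i, (1 - r' i / r i) * (r i * (P.mulVec Δt) i ^ 2) := by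
  have hr : ∀ i, 0 < r i := fun i => (hr' i).trans_le (hle i)
  have hΨr := sInf_values_eq_of_forall_le (p := fun x => A.mulVec x = c)
    (f := fun x => ∑ i, r i * (P.mulVec x) i ^ 2) hΔA hΔmin
  have hΨr' := sInf_values_le_of_nonneg (p := fun x => A.mulVec x = c)
    (fun x => sum_weighted_sq_nonneg (fun i => (hr' i).le) (P.mulVec x)) hΔA
  rw [sum_weighted_sq_eq_sub (fun i => (hr i).ne') (P.mulVec Δt)] at hΨr'
  have hdec := sum_weight_decrement_nonneg hr hle (P.mulVec Δt)
  linarith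

/-- Lemma D.1 (energy decrease): if r' ≤ r, then
Ψ(r') ≤ Ψ(r) − (1/2)·∑ᵢ (1 − r'ᵢ/rᵢ)·rᵢ·(PΔ̃)ᵢ². -/
theorem energy_decrease
    (m n d : ℕ) (P : Matrix (Fin m) (Fin n) ℝ) (A : Matrix (Fin d) (Fin n) ℝ)
    (c : Fin d → ℝ) (hP : P.rank = n) (hA : A.rank = d)
    (r r' : Fin m → ℝ) (hr : ∀ i, 0 < r i) (hr' : ∀ i, 0 < r' i)
    (hle : ∀ i, r' i ≤ r i)
    (Δt : Fin n → ℝ) (hΔA : A.mulVec Δt = c)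
    (hΔmin : ∀ x : Fin n → ℝ, A.mulVec x = c →
      (∑ i, r i * (P.mulVec Δt) i ^ 2) ≤ ∑ i, r i * (P.mulVec x) i ^ 2) :
    sInf {v : ℝ | ∃ x : Fin n → ℝ, A.mulVec x = c ∧
        v = ∑ i, r' i * (P.mulVec x) i ^ 2} ≤
      sInf {v : ℝ | ∃ x : Fin n → ℝ, A.mulVec x = c ∧
        v = ∑ i, r i * (P.mulVec x) i ^ 2} -
      (1 / 2) * ∑ i, (1 - r' i / r i) * (r i * (P.mulVec Δt) i ^ 2) :=
  energy_decrease_general m n d P A c r r' hr' hle Δt hΔA hΔmin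
end
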